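/- arXiv:2510.18120 — 4 statements merged into one kernel-verified Lean document; each statement's English description precedes it below -/
import Mathlib

section
/- Let {(x_i, y_i)}_{i=1}^n be a dataset with pairwise distinct inputs x_i on the unit sphere S^{d-1} of R^d (d > 1) and labels bounded by |y_i| <= D. Then there exists a two-layer ReLU network f_theta(x) = sum_{k=1}^K v_k * phi(w_k^T x - b_k) + beta of width K <= n that interpolates the dataset (f_theta(x_i) = y_i for all i) and whose training-loss Hessian satisfies lambda_max(Hessian of L at theta) <= 1 + (D^2 + 2)/n. Moreover, if the output bias parameter beta is removed from the model, there exists such an interpolating network with lambda_max(Hessian of L at theta) <= (D^2 + 2)/n. -/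
open MeasureTheory
open scoped ENNReal RealInnerProductSpace NNReal

noncomputable section

abbrev Vec (d : ℕ) : Type := EuclideanSpace ℝ (Fin d)

/-- Parameters of a two-layer ReLU network of width `K` in dimension `d`:
`(v, w, b, β)` with outer weights `v`, inner weights `w`, inner biases `b`,
and output bias `β`. -/
abbrev Params (d K : ℕ) : Type := (Fin K → ℝ) × (Fin K → Vec d) × (Fin K → ℝ) × ℝ

/-- The ReLU function. -/
def relu (z : ℝ) : ℝ := max z 0

/-- The two-layer ReLU network `f_θ`. -/
def netFun {d K : ℕ} (θ : Params d K) (x : Vec d) : ℝ :=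
  (∑ k, θ.1 k * relu (⟪θ.2.1 k, x⟫ - θ.2.2.1 k)) + θ.2.2.2

/-- The (halved, mean) squared-error training loss, as a function of the parameters. -/
def trainLoss {d K n : ℕ} (x : Fin n → Vec d) (y : Fin n → ℝ) (θ : Params d K) : ℝ :=
  (1 / (2 * (n : ℝ))) * ∑ i, (netFun θ (x i) - y i) ^ 2

/-- The squared Euclidean norm of a parameter vector. -/
def paramNormSq {d K : ℕ} (θ : Params d K) : ℝ :=
  (∑ k, (θ.1 k) ^ 2) + (∑ k, ‖θ.2.1 k‖ ^ 2) + (∑ k, (θ.2.2.1 k) ^ 2) + θ.2.2.2 ^ 2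

/-- Largest eigenvalue of the Hessian of the training loss: the supremum of the
second-derivative quadratic form over the (Euclidean) unit sphere of parameter space. -/
def lambdaMaxHessian {d K n : ℕ} (x : Fin n → Vec d) (y : Fin n → ℝ) (θ : Params d K) : ℝ :=
  ⨆ v : {v : Params d K // paramNormSq v = 1},
    iteratedFDeriv ℝ 2 (trainLoss x y) θ ![v.1, v.1]

/-- Parameters below the edge of stability at learning rate `η`. -/
def BEoS {d K n : ℕ} (η : ℝ) (x : Fin n → Vec d) (y : Fin n → ℝ) : Set (Params d K) :=
  {θ | lambdaMaxHessian x y θ ≤ 2 / η}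

/-- Population risk with squared loss `(1/2)(f(x) - y)^2`. -/
def popRisk {d : ℕ} (P : Measure (Vec d × ℝ)) (f : Vec d → ℝ) : ℝ :=
  ∫ z, (1 / 2) * (f z.1 - z.2) ^ 2 ∂P

/-- Empirical risk with squared loss `(1/2)(f(x) - y)^2`. -/
def empRisk {d n : ℕ} (data : Fin n → Vec d × ℝ) (f : Vec d → ℝ) : ℝ :=
  (1 / (n : ℝ)) * ∑ i, (1 / 2) * (f (data i).1 - (data i).2) ^ 2

/-- The generalization gap. -/
def genGap {d n : ℕ} (P : Measure (Vec d × ℝ)) (data : Fin n → Vec d × ℝ) (f : Vec d → ℝ) : ℝ :=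
  |popRisk P f - empRisk data f|

/-- The open halfspace `{x : uᵀx > t}`. -/
def halfSpace {d : ℕ} (u : Vec d) (t : ℝ) : Set (Vec d) := {x | t < ⟪u, x⟫}

/-- The auxiliary weight function `g̃_μ(u,t)`. -/
def gTilde {d : ℕ} (μ : Measure (Vec d)) (u : Vec d) (t : ℝ) : ℝ :=
  (μ (halfSpace u t)).toReal ^ 2 *
    ((∫ x in halfSpace u t, (⟪u, x⟫ - t) ∂μ) / (μ (halfSpace u t)).toReal) *
    Real.sqrt (1 + ‖(μ (halfSpace u t)).toReal⁻¹ • (∫ x in halfSpace u t, x ∂μ)‖ ^ 2)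

/-- The weight function `g_μ(u,t)` of a distribution `μ`. -/
def gWeight {d : ℕ} (μ : Measure (Vec d)) (u : Vec d) (t : ℝ) : ℝ :=
  min (gTilde μ u t) (gTilde μ (-u) (-t))

/-- The empirical measure of the sample `x_1, …, x_n`. -/
def empMeasure {d n : ℕ} (x : Fin n → Vec d) : Measure (Vec d) :=
  ((n : ℝ≥0∞))⁻¹ • ∑ i, Measure.dirac (x i)

/-- The `g`-weighted path norm of a two-layer network. -/
def pathNorm {d K : ℕ} (g : Vec d → ℝ → ℝ) (θ : Params d K) : ℝ :=
  ∑ k, |θ.1 k| * ‖θ.2.1 k‖ * g ((‖θ.2.1 k‖)⁻¹ • θ.2.1 k) (θ.2.2.1 k / ‖θ.2.1 k‖)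

/-- Sup norm of `f` on a set `s`. -/
def supOn {d : ℕ} (f : Vec d → ℝ) (s : Set (Vec d)) : ℝ := ⨆ x : s, |f ↑x|

/-- The uniform distribution on a set `s` regarded as an `m`-dimensional set:
normalized `m`-dimensional Hausdorff measure. -/
def uniformOn {d : ℕ} (m : ℕ) (s : Set (Vec d)) : Measure (Vec d) :=
  (μH[(m : ℝ)] s)⁻¹ • (μH[(m : ℝ)]).restrict s

/-- The uniform distribution on the unit sphere of `ℝ^d`:
normalized `(d-1)`-dimensional Hausdorff measure on the sphere. -/
def sphereUnif (d : ℕ) : Measure (Vec d) :=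
  (μH[(d : ℝ) - 1] (Metric.sphere (0 : Vec d) 1))⁻¹ •
    (μH[(d : ℝ) - 1]).restrict (Metric.sphere (0 : Vec d) 1)

/-- The isotropic `α`-powered-radial distribution: the law of `X = h(R) • U` with
`R ~ Uniform[0,1]`, `U ~ Uniform(S^{d-1})` independent and `h(r) = 1 - (1-r)^{1/α}`. -/
def alphaRadial (d : ℕ) (α : ℝ) : Measure (Vec d) :=
  Measure.map (fun p : ℝ × Vec d => (1 - (1 - p.1) ^ (1 / α)) • p.2)
    ((volume.restrict (Set.Icc (0 : ℝ) 1)).prod (sphereUnif d))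

/-- The thin spherical cap at angular scale `ε` around `u`. -/
def cap {d : ℕ} (u : Vec d) (ε : ℝ) : Set (Vec d) :=
  {x | x ∈ Metric.closedBall (0 : Vec d) 1 ∧ 1 - ε ^ 2 < ⟪u, x⟫}


/-- Parameters of a two-layer ReLU network of width `K` without output bias. -/
abbrev ParamsNB (d K : ℕ) : Type := (Fin K → ℝ) × (Fin K → Vec d) × (Fin K → ℝ)

/-- The two-layer ReLU network without output bias. -/
def netFunNB {d K : ℕ} (θ : ParamsNB d K) (x : Vec d) : ℝ :=
  ∑ k, θ.1 k * relu (⟪θ.2.1 k, x⟫ - θ.2.2 k)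

/-- Training loss as a function of the parameters of a network without output bias. -/
def trainLossNB {d K n : ℕ} (x : Fin n → Vec d) (y : Fin n → ℝ) (θ : ParamsNB d K) : ℝ :=
  (1 / (2 * (n : ℝ))) * ∑ i, (netFunNB θ (x i) - y i) ^ 2

/-- Squared Euclidean norm of a parameter vector (no output bias). -/
def paramNormSqNB {d K : ℕ} (θ : ParamsNB d K) : ℝ :=
  (∑ k, (θ.1 k) ^ 2) + (∑ k, ‖θ.2.1 k‖ ^ 2) + (∑ k, (θ.2.2 k) ^ 2)

/-- Largest eigenvalue of the Hessian of the training loss (no output bias). -/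
def lambdaMaxHessianNB {d K n : ℕ} (x : Fin n → Vec d) (y : Fin n → ℝ) (θ : ParamsNB d K) : ℝ :=
  ⨆ v : {v : ParamsNB d K // paramNormSqNB v = 1},
    iteratedFDeriv ℝ 2 (trainLossNB x y) θ ![v.1, v.1]

/-!
Put one hidden unit at each data point: with `s` large, the unit
`z ↦ ρₖ - s (1 - ⟪xₖ, z⟫)` is positive at `xₖ`, where it equals `ρₖ`, and negative at every other
`xⱼ`, since distinct unit vectors have `⟪xₖ, xⱼ⟫ < 1`. Outer weights `vₖ` with `vₖ ρₖ = yₖ`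
interpolate the data; take `ρₖ = |yₖ|`, `vₖ = sign yₖ` (or `ρₖ = 1`, `vₖ = 0` if `yₖ = 0`).

Near these parameters no unit changes its activation pattern, so the loss is a polynomial there,
and at an interpolating point its Hessian is the Gauss–Newton form `(1/n) ∑ᵢ (∂ᵤ f(xᵢ))²`. The
derivative `∂ᵤ f(xᵢ)` only sees the parameters of unit `i` (and the output bias), so Cauchy–Schwarz
bounds its square by `ρᵢ² + 2 vᵢ² ≤ D² + 2` times the squared norm of that block of `u`. Summing the
blocks gives `(D² + 2)/n`; the output bias enters all `n` terms and adds at most `1`.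
-/

open Finset Filter Topology

section LineDerivative

variable {𝕜 E F : Type*} [NontriviallyNormedField 𝕜] [NormedAddCommGroup E] [NormedSpace 𝕜 E]
  [NormedAddCommGroup F] [NormedSpace 𝕜 F]

theorem iteratedFDeriv_apply_const_eq_iteratedDeriv_line {k : ℕ} {f : E → F}
    (hf : ContDiff 𝕜 k f) (x u : E) :
    iteratedFDeriv 𝕜 k f x (fun _ => u) = iteratedDeriv k (fun t : 𝕜 => f (x + t • u)) 0 := by
  have hline : (fun t : 𝕜 => f (x + t • u)) =
      (fun z => f (x + z)) ∘ ContinuousLinearMap.toSpanSingleton 𝕜 u := by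
    funext t; simp
  have hshift : ContDiff 𝕜 k fun z => f (x + z) := hf.comp (contDiff_const.add contDiff_id)
  rw [iteratedDeriv_eq_iteratedFDeriv, hline,
    ContinuousLinearMap.iteratedFDeriv_comp_right _ hshift _ le_rfl, iteratedFDeriv_comp_add_left]
  simp

end LineDerivative

open Polynomial in
theorem iteratedDeriv_two_mul_sum_sq_at_zero (c : ℝ) {ι : Type*} (s : Finset ι) (p q : ι → ℝ) :
    iteratedDeriv 2 (fun t : ℝ => c * ∑ i ∈ s, (p i * t + q i * t ^ 2) ^ 2) 0 =
      2 * c * ∑ i ∈ s, p i ^ 2 := by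
  set P : ℝ[X] := C c * ∑ i ∈ s, (C (p i) * X + C (q i) * X ^ 2) ^ 2
  have hP : (fun t : ℝ => c * ∑ i ∈ s, (p i * t + q i * t ^ 2) ^ 2) = fun t => P.eval t := by
    simp [P, eval_finsetSum]
  have hderiv : deriv (fun t => P.eval t) = fun t => P.derivative.eval t :=
    funext fun t => P.deriv
  rw [iteratedDeriv_succ', iteratedDeriv_one, hP, hderiv, Polynomial.deriv]
  simp [P, eval_finsetSum, Finset.mul_sum, derivative_sq, derivative_mul]
  exact sum_congr rfl fun i _ => by ring

theorem sq_mul_add_mul_inner_sub_le {E : Type*} [NormedAddCommGroup E] [InnerProductSpace ℝ E]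
    {x : E} (hx : ‖x‖ = 1) (ρ v a c : ℝ) (W : E) :
    (a * ρ + v * (⟪W, x⟫ - c)) ^ 2 ≤ (ρ ^ 2 + 2 * v ^ 2) * (a ^ 2 + ‖W‖ ^ 2 + c ^ 2) := by
  have hW : ⟪W, x⟫ ^ 2 ≤ ‖W‖ ^ 2 := by
    simpa [hx] using sq_le_sq' (neg_le_of_abs_le (abs_real_inner_le_norm W x))
      (le_of_abs_le (abs_real_inner_le_norm W x))
  -- Cauchy–Schwarz for `(ρ, v, -v)` and `(a, ⟪W, x⟫, c)`, via Lagrange's identity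
  nlinarith [sq_nonneg (ρ * ⟪W, x⟫ - v * a), sq_nonneg (ρ * c + v * a),
    sq_nonneg (v * c + v * ⟪W, x⟫),
    mul_le_mul_of_nonneg_left hW (by positivity : 0 ≤ ρ ^ 2 + 2 * v ^ 2)]

-- `(z + τ)² ≤ (M + m) (z²/M + τ²/m)`, with the denominators cleared
theorem mul_sq_add_le {z τ M S m : ℝ} (hM : 0 < M) (hm : 0 ≤ m) (hz : z ^ 2 ≤ M * S) :
    m * (z + τ) ^ 2 ≤ (M + m) * (m * S + τ ^ 2) := by
  have hcross : 0 ≤ m ^ 2 * S + M * τ ^ 2 - 2 * m * z * τ := by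
    refine nonneg_of_mul_nonneg_right ?_ hM
    nlinarith [sq_nonneg (m * z - M * τ), mul_le_mul_of_nonneg_left hz (sq_nonneg m)]
  nlinarith [mul_le_mul_of_nonneg_left hz hm]

theorem sum_sq_add_le {ι : Type*} [Fintype ι] {z S : ι → ℝ} {τ M : ℝ} (hM : 0 < M)
    (hz : ∀ i, z i ^ 2 ≤ M * S i) (hS : ∑ i, S i + τ ^ 2 = 1) :
    ∑ i, (z i + τ) ^ 2 ≤ M + (Fintype.card ι : ℝ) := by
  set m : ℝ := (Fintype.card ι : ℝ)
  rcases (Nat.cast_nonneg (Fintype.card ι) : (0 : ℝ) ≤ m).eq_or_lt with hm | hm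
  · have : IsEmpty ι := Fintype.card_eq_zero_iff.mp (by exact_mod_cast hm.symm)
    simp only [univ_eq_empty, sum_empty]
    linarith
  have hsum : m * ∑ i, (z i + τ) ^ 2 ≤ m * (M + m) := calc
    m * ∑ i, (z i + τ) ^ 2 ≤ ∑ i, (M + m) * (m * S i + τ ^ 2) := by
      rw [mul_sum]; exact sum_le_sum fun i _ => mul_sq_add_le hM hm.le (hz i)
    _ = m * (M + m) := by
      rw [← mul_sum, sum_add_distrib, ← mul_sum, sum_const, card_univ, nsmul_eq_mul, ← mul_add,
        hS]
      ring
  exact le_of_mul_le_mul_left hsum hm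

section Network

variable {d n : ℕ} (x : Fin n → Vec d) (y : Fin n → ℝ)

def IsDiagonalActivation (w : Fin n → Vec d) (b : Fin n → ℝ) : Prop :=
  (∀ k, 0 < ⟪w k, x k⟫ - b k) ∧ ∀ k j, k ≠ j → ⟪w k, x j⟫ - b k < 0

variable {x}

theorem IsDiagonalActivation.eventually_nhds {w : Fin n → Vec d} {b : Fin n → ℝ} (h : IsDiagonalActivation x w b) :
    ∀ᶠ p in 𝓝 (w, b), IsDiagonalActivation x p.1 p.2 := by
  have hcont : ∀ k j, Continuous fun p : (Fin n → Vec d) × (Fin n → ℝ) => ⟪p.1 k, x j⟫ - p.2 k :=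
    fun k j => by fun_prop
  refine (eventually_all.2 fun k => ?_).and (eventually_all.2 fun k => eventually_all.2 fun j =>
    eventually_imp_distrib_left.2 fun hkj => ?_)
  · exact continuousAt_const.eventually_lt (hcont k k).continuousAt (h.1 k)
  · exact (hcont k j).continuousAt.eventually_lt continuousAt_const (h.2 k j hkj)

theorem netFun_apply_of_isDiagonalActivation {θ : Params d n} (h : IsDiagonalActivation x θ.2.1 θ.2.2.1) (i : Fin n) :
    netFun θ (x i) = θ.1 i * (⟪θ.2.1 i, x i⟫ - θ.2.2.1 i) + θ.2.2.2 := by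
  rw [netFun, sum_eq_single i (fun k _ hki => by rw [relu, max_eq_right (h.2 k i hki).le, mul_zero])
    (by simp), relu, max_eq_left (h.1 i).le]

variable (x)

def diagLoss (θ : Params d n) : ℝ :=
  (1 / (2 * (n : ℝ))) * ∑ i, (θ.1 i * (⟪θ.2.1 i, x i⟫ - θ.2.2.1 i) + θ.2.2.2 - y i) ^ 2

theorem contDiff_diagLoss : ContDiff ℝ 2 (diagLoss x y) := by
  refine contDiff_const.mul (ContDiff.sum fun i _ => ?_)
  have hinner : ContDiff ℝ 2 fun θ : Params d n => ⟪θ.2.1 i, x i⟫ :=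
    ContDiff.inner ℝ (by fun_prop) contDiff_const
  fun_prop

variable {x y}

theorem trainLoss_eventuallyEq_diagLoss {θ : Params d n} (h : IsDiagonalActivation x θ.2.1 θ.2.2.1) :
    trainLoss x y =ᶠ[𝓝 θ] diagLoss x y := by
  have hnhds : Tendsto (fun θ : Params d n => (θ.2.1, θ.2.2.1)) (𝓝 θ) (𝓝 (θ.2.1, θ.2.2.1)) :=
    (by fun_prop : Continuous fun θ : Params d n => (θ.2.1, θ.2.2.1)).tendsto θ
  filter_upwards [hnhds.eventually h.eventually_nhds] with θ' h'
  simp only [trainLoss, diagLoss, netFun_apply_of_isDiagonalActivation h']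

theorem iteratedFDeriv_two_trainLoss {θ : Params d n} (h : IsDiagonalActivation x θ.2.1 θ.2.2.1)
    (hfit : ∀ i, netFun θ (x i) = y i) (u : Params d n) :
    iteratedFDeriv ℝ 2 (trainLoss x y) θ ![u, u] = (1 / (n : ℝ)) * ∑ i,
      (u.1 i * (⟪θ.2.1 i, x i⟫ - θ.2.2.1 i) + θ.1 i * (⟪u.2.1 i, x i⟫ - u.2.2.1 i) +
        u.2.2.2) ^ 2 := by
  have hline : (fun t : ℝ => diagLoss x y (θ + t • u)) = fun t => (1 / (2 * (n : ℝ))) * ∑ i,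
      ((u.1 i * (⟪θ.2.1 i, x i⟫ - θ.2.2.1 i) + θ.1 i * (⟪u.2.1 i, x i⟫ - u.2.2.1 i) + u.2.2.2) * t +
        (u.1 i * (⟪u.2.1 i, x i⟫ - u.2.2.1 i)) * t ^ 2) ^ 2 := by
    funext t
    refine congrArg _ (sum_congr rfl fun i _ => ?_)
    rw [← hfit i, netFun_apply_of_isDiagonalActivation h]
    simp only [Prod.fst_add, Prod.snd_add, Prod.smul_fst, Prod.smul_snd, Pi.add_apply,
      Pi.smul_apply, smul_eq_mul, inner_add_left, real_inner_smul_left]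
    ring
  rw [((trainLoss_eventuallyEq_diagLoss h).iteratedFDeriv ℝ 2).eq_of_nhds,
    Matrix.vec_single_eq_const, Matrix.vecCons_const, iteratedFDeriv_apply_const_eq_iteratedDeriv_line (contDiff_diagLoss x y), hline,
    iteratedDeriv_two_mul_sum_sq_at_zero]
  ring

end Network

section HessianBound

variable {d n : ℕ} {x : Fin n → Vec d} {y : Fin n → ℝ}

theorem lambdaMaxHessian_le (hx : ∀ i, ‖x i‖ = 1) (θ : Params d n) (h : IsDiagonalActivation x θ.2.1 θ.2.2.1)
    (hfit : ∀ i, netFun θ (x i) = y i) {M : ℝ} (hM0 : 0 < M)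
    (hM : ∀ i, (⟪θ.2.1 i, x i⟫ - θ.2.2.1 i) ^ 2 + 2 * θ.1 i ^ 2 ≤ M) :
    lambdaMaxHessian x y θ ≤ 1 + M / n := by
  refine Real.iSup_le (fun ⟨u, hu⟩ => ?_) (by positivity)
  have hblock : ∀ i,
      (u.1 i * (⟪θ.2.1 i, x i⟫ - θ.2.2.1 i) + θ.1 i * (⟪u.2.1 i, x i⟫ - u.2.2.1 i)) ^ 2 ≤
        M * (u.1 i ^ 2 + ‖u.2.1 i‖ ^ 2 + u.2.2.1 i ^ 2) := fun i =>
    (sq_mul_add_mul_inner_sub_le (hx i) _ _ _ _ _).trans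
      (mul_le_mul_of_nonneg_right (hM i) (by positivity))
  have hsum := sum_sq_add_le hM0 hblock (τ := u.2.2.2)
    (by simpa only [paramNormSq, sum_add_distrib] using hu)
  rw [Fintype.card_fin] at hsum
  rw [iteratedFDeriv_two_trainLoss h hfit]
  calc (1 / (n : ℝ)) * _ ≤ (1 / n) * (M + n) := mul_le_mul_of_nonneg_left hsum (by positivity)
    _ = M / n + n / n := by ring
    _ ≤ 1 + M / n := by linarith [div_self_le_one (n : ℝ)]

end HessianBound

section ZeroBias

variable {d n : ℕ} {x : Fin n → Vec d} {y : Fin n → ℝ}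

variable (d n) in
def withZeroBias : ParamsNB d n →L[ℝ] Params d n :=
  (ContinuousLinearMap.fst ℝ _ _).prod
    (((ContinuousLinearMap.fst ℝ _ _).comp (ContinuousLinearMap.snd ℝ _ _)).prod
      (((ContinuousLinearMap.snd ℝ _ _).comp (ContinuousLinearMap.snd ℝ _ _)).prod 0))

@[simp]
theorem withZeroBias_apply (θ : ParamsNB d n) : withZeroBias d n θ = (θ.1, θ.2.1, θ.2.2, 0) :=
  rfl

theorem netFunNB_eq_netFun (θ : ParamsNB d n) : netFunNB θ = netFun (θ.1, θ.2.1, θ.2.2, 0) := by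
  funext z
  simp [netFunNB, netFun]

theorem trainLossNB_eq_comp_withZeroBias :
    trainLossNB x y = trainLoss x y ∘ withZeroBias d n := by
  funext θ
  simp [trainLossNB, trainLoss, netFunNB_eq_netFun]

theorem iteratedFDeriv_two_trainLossNB {θ : ParamsNB d n} (h : IsDiagonalActivation x θ.2.1 θ.2.2)
    (u : ParamsNB d n) : iteratedFDeriv ℝ 2 (trainLossNB x y) θ ![u, u] =
      iteratedFDeriv ℝ 2 (trainLoss x y) (θ.1, θ.2.1, θ.2.2, 0)
        ![(u.1, u.2.1, u.2.2, 0), (u.1, u.2.1, u.2.2, 0)] := by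
  have hloc : trainLoss x y =ᶠ[𝓝 (withZeroBias d n θ)] diagLoss x y :=
    trainLoss_eventuallyEq_diagLoss h
  have hlocNB : trainLossNB x y =ᶠ[𝓝 θ] diagLoss x y ∘ withZeroBias d n := by
    rw [trainLossNB_eq_comp_withZeroBias]
    exact hloc.comp_tendsto ((withZeroBias d n).continuous.tendsto θ)
  rw [(hlocNB.iteratedFDeriv ℝ 2).eq_of_nhds, ← withZeroBias_apply, ← withZeroBias_apply,
    (hloc.iteratedFDeriv ℝ 2).eq_of_nhds,
    (withZeroBias d n).iteratedFDeriv_comp_right (contDiff_diagLoss x y) _ le_rfl,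
    ContinuousMultilinearMap.compContinuousLinearMap_apply]
  congr 1
  funext i
  fin_cases i <;> rfl

theorem lambdaMaxHessianNB_le (hx : ∀ i, ‖x i‖ = 1) (θ : ParamsNB d n)
    (h : IsDiagonalActivation x θ.2.1 θ.2.2) (hfit : ∀ i, netFunNB θ (x i) = y i) {M : ℝ} (hM0 : 0 ≤ M)
    (hM : ∀ i, (⟪θ.2.1 i, x i⟫ - θ.2.2 i) ^ 2 + 2 * θ.1 i ^ 2 ≤ M) :
    lambdaMaxHessianNB x y θ ≤ M / n := by
  refine Real.iSup_le (fun ⟨u, hu⟩ => ?_) (by positivity)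
  have hblock : ∀ i,
      (u.1 i * (⟪θ.2.1 i, x i⟫ - θ.2.2 i) + θ.1 i * (⟪u.2.1 i, x i⟫ - u.2.2 i)) ^ 2 ≤
        M * (u.1 i ^ 2 + ‖u.2.1 i‖ ^ 2 + u.2.2 i ^ 2) := fun i =>
    (sq_mul_add_mul_inner_sub_le (hx i) _ _ _ _ _).trans
      (mul_le_mul_of_nonneg_right (hM i) (by positivity))
  have hsum : ∑ i, (u.1 i * (⟪θ.2.1 i, x i⟫ - θ.2.2 i) + θ.1 i * (⟪u.2.1 i, x i⟫ - u.2.2 i)) ^ 2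
      ≤ M := calc
    _ ≤ ∑ i, M * (u.1 i ^ 2 + ‖u.2.1 i‖ ^ 2 + u.2.2 i ^ 2) := sum_le_sum fun i _ => hblock i
    _ = M := by rw [← mul_sum, sum_add_distrib, sum_add_distrib, ← paramNormSqNB, hu, mul_one]
  have hfit' : ∀ i, netFun (θ.1, θ.2.1, θ.2.2, 0) (x i) = y i := by
    simpa only [netFunNB_eq_netFun] using hfit
  rw [iteratedFDeriv_two_trainLossNB h,
    iteratedFDeriv_two_trainLoss (θ := (θ.1, θ.2.1, θ.2.2, 0)) h hfit']
  simpa [div_eq_inv_mul] using mul_le_mul_of_nonneg_left hsum (by positivity : (0 : ℝ) ≤ 1 / n)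

end ZeroBias

theorem exists_pos_mul_eq_of_abs_le {y D : ℝ} (hy : |y| ≤ D) :
    ∃ ρ v : ℝ, 0 < ρ ∧ v * ρ = y ∧ ρ ^ 2 + 2 * v ^ 2 ≤ D ^ 2 + 2 := by
  rcases eq_or_ne y 0 with rfl | hy0
  · exact ⟨1, 0, one_pos, zero_mul 1, by nlinarith [sq_nonneg D]⟩
  · have hsign : (y / |y|) ^ 2 = 1 := by rw [div_pow, sq_abs, div_self (pow_ne_zero 2 hy0)]
    have habs : |y| ^ 2 ≤ D ^ 2 := pow_le_pow_left₀ (abs_nonneg y) hy 2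
    exact ⟨|y|, y / |y|, abs_pos.2 hy0, div_mul_cancel₀ y (abs_ne_zero.2 hy0), by linarith⟩

theorem exists_isDiagonalActivation {d n : ℕ} {x : Fin n → Vec d} (hx : ∀ i, ‖x i‖ = 1)
    (hinj : Function.Injective x) {ρ : Fin n → ℝ} (hρ : ∀ i, 0 < ρ i) :
    ∃ (w : Fin n → Vec d) (b : Fin n → ℝ),
      (∀ k, w k ≠ 0) ∧ IsDiagonalActivation x w b ∧ ∀ i, ⟪w i, x i⟫ - b i = ρ i := by
  have hgap : ∀ k j, k ≠ j → 0 < 1 - ⟪x k, x j⟫ := fun k j hkj =>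
    sub_pos.2 ((inner_lt_one_iff_real_of_norm_eq_one (hx k) (hx j)).2 (hinj.ne hkj))
  obtain ⟨s₀, hs₀⟩ := Finite.exists_le fun p : Fin n × Fin n => ρ p.1 / (1 - ⟪x p.1, x p.2⟫)
  set s := max s₀ 0 + 1
  have hs : 0 < s := by positivity
  have hpre : ∀ k j, ⟪s • x k, x j⟫ - (s - ρ k) = ρ k - s * (1 - ⟪x k, x j⟫) := fun k j => by
    rw [real_inner_smul_left]; ring
  refine ⟨fun k => s • x k, fun k => s - ρ k,
    fun k => smul_ne_zero hs.ne' (ne_zero_of_norm_ne_zero (by simp [hx k])),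
    ⟨fun k => ?_, fun k j hkj => ?_⟩, fun i => ?_⟩
  · rw [hpre, real_inner_self_eq_norm_sq, hx k]; simpa using hρ k
  · have hlt : ρ k / (1 - ⟪x k, x j⟫) < s :=
      ((hs₀ (k, j)).trans (le_max_left s₀ 0)).trans_lt (lt_add_one _)
    rw [hpre, sub_neg]
    exact (div_lt_iff₀ (hgap k j hkj)).1 hlt
  · rw [hpre, real_inner_self_eq_norm_sq, hx i]; ring

theorem statement3_general (d n : ℕ)
    (x : Fin n → Vec d) (y : Fin n → ℝ) (D₀ : ℝ)
    (hx : ∀ i, x i ∈ Metric.sphere (0 : Vec d) 1)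
    (hinj : Function.Injective x)
    (hy : ∀ i, |y i| ≤ D₀) :
    (∃ K : ℕ, K ≤ n ∧ ∃ θ : Params d K,
      (∀ k, θ.2.1 k ≠ 0) ∧
      (∀ i, netFun θ (x i) = y i) ∧
      lambdaMaxHessian x y θ ≤ 1 + (D₀ ^ 2 + 2) / (n : ℝ)) ∧
    (∃ K : ℕ, K ≤ n ∧ ∃ θ : ParamsNB d K,
      (∀ k, θ.2.1 k ≠ 0) ∧
      (∀ i, netFunNB θ (x i) = y i) ∧
      lambdaMaxHessianNB x y θ ≤ (D₀ ^ 2 + 2) / (n : ℝ)) := by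
  have hunit : ∀ i, ‖x i‖ = 1 := fun i => mem_sphere_zero_iff_norm.1 (hx i)
  choose ρ v hρ hvρ hM using fun i => exists_pos_mul_eq_of_abs_le (hy i)
  obtain ⟨w, b, hw, hact, hpre⟩ := exists_isDiagonalActivation hunit hinj hρ
  have hM' : ∀ i, (⟪w i, x i⟫ - b i) ^ 2 + 2 * v i ^ 2 ≤ D₀ ^ 2 + 2 := fun i => hpre i ▸ hM i
  have hfit : ∀ i, netFun ((v, w, b, 0) : Params d n) (x i) = y i := fun i => by
    rw [netFun_apply_of_isDiagonalActivation (θ := (v, w, b, 0)) hact, hpre, hvρ, add_zero]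
  have hfitNB : ∀ i, netFunNB ((v, w, b) : ParamsNB d n) (x i) = y i := by
    simpa only [netFunNB_eq_netFun] using hfit
  have hM0 : 0 < D₀ ^ 2 + 2 := by positivity
  exact ⟨⟨n, le_rfl, (v, w, b, 0), hw, hfit,
      lambdaMaxHessian_le hunit (v, w, b, 0) hact hfit hM0 hM'⟩,
    ⟨n, le_rfl, (v, w, b), hw, hfitNB,
      lambdaMaxHessianNB_le hunit (v, w, b) hact hfitNB hM0.le hM'⟩⟩

/-- Theorem 3.5: Flat interpolation of spherically supported data, with
width at most `n`. For pairwise distinct inputs on the unit sphere and labels bounded by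
`D₀`, there is an interpolating two-layer ReLU network of width `K ≤ n` whose training-loss
Hessian has largest eigenvalue at most `1 + (D₀² + 2)/n`; if the output bias is removed, the
bound improves to `(D₀² + 2)/n`. -/
theorem statement3 (d n : ℕ) (hd : 1 < d) (hn : 0 < n)
    (x : Fin n → Vec d) (y : Fin n → ℝ) (D₀ : ℝ)
    (hx : ∀ i, x i ∈ Metric.sphere (0 : Vec d) 1)
    (hinj : Function.Injective x)
    (hy : ∀ i, |y i| ≤ D₀) :
    (∃ K : ℕ, K ≤ n ∧ ∃ θ : Params d K,
      (∀ k, θ.2.1 k ≠ 0) ∧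
      (∀ i, netFun θ (x i) = y i) ∧
      lambdaMaxHessian x y θ ≤ 1 + (D₀ ^ 2 + 2) / (n : ℝ)) ∧
    (∃ K : ℕ, K ≤ n ∧ ∃ θ : ParamsNB d K,
      (∀ k, θ.2.1 k ≠ 0) ∧
      (∀ i, netFunNB θ (x i) = y i) ∧
      lambdaMaxHessianNB x y θ ≤ (D₀ ^ 2 + 2) / (n : ℝ)) :=
  statement3_general d n x y D₀ hx hinj hy

end
end

section
/- Let P_X = sum_{j=1}^J p_j P_{X,j} be a mixture distribution on R^d where each p_j > 0, sum_j p_j = 1, and each component P_{X,j} is supported on the unit disc B_1^{V_j} of an affine subspace V_j (in particular ||X|| <= 1 almost surely under each P_{X,j}). Let g be the weight function induced by the mixture P_X and g_j the weight function induced by the component P_{X,j}. Then for every j in {1, ..., J} and every (u, t) in S^{d-1} x R, g(u, t) >= (p_j^2 / sqrt(2)) * g_j(u, t). Consequently, for any M, C > 0, every function in the class F_g(B_1^{V_j}; M, C) belongs to F_{g_j}(B_1^{V_j}; M, sqrt(2) C / p_j^2). -/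
open MeasureTheory
open scoped ENNReal RealInnerProductSpace NNReal

noncomputable section

/-- Membership in the bounded `g`-weighted variation class `F_g(Ω; M, C)`: `f` is bounded by
`M` on `Ω` and admits a representation `f(x) = ∫ φ(uᵀx - t) dν(u,t) + cᵀx + c₀` on `Ω` for a
finite signed Radon measure `ν` (given by its Jordan pair `νp, νm`) supported on
`S^{d-1} × [-1, 1]` with `g`-weighted variation `∫ g d|ν| ≤ C`. -/
def VgMem {d : ℕ} (g : Vec d → ℝ → ℝ) (Ω : Set (Vec d)) (M C : ℝ) (f : Vec d → ℝ) : Prop :=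
  (∀ x ∈ Ω, |f x| ≤ M) ∧
  ∃ νp νm : Measure (Vec d × ℝ), IsFiniteMeasure νp ∧ IsFiniteMeasure νm ∧
    νp ((Metric.sphere (0 : Vec d) 1 ×ˢ Set.Icc (-1 : ℝ) 1)ᶜ) = 0 ∧
    νm ((Metric.sphere (0 : Vec d) 1 ×ˢ Set.Icc (-1 : ℝ) 1)ᶜ) = 0 ∧
    (∃ (c : Vec d) (c₀ : ℝ), ∀ x ∈ Ω,
      f x = (∫ q, relu (⟪q.1, x⟫ - q.2) ∂νp) - (∫ q, relu (⟪q.1, x⟫ - q.2) ∂νm)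
              + ⟪c, x⟫ + c₀) ∧
    (∫ q, g q.1 q.2 ∂νp) + (∫ q, g q.1 q.2 ∂νm) ≤ C

/-! Write `P = ρ(H)` and `I = ∫_H (⟪u, x⟫ - t) dρ` for the halfspace `H = {x | t < ⟪u, x⟫}`.
Then `g̃_ρ(u, t) = P · I · √(1 + ‖m‖²)` with `m` the barycenter of `ρ` on `H`; when `ρ` lives in
the unit ball, `‖m‖ ≤ 1`, so `P · I ≤ g̃_ρ(u, t) ≤ √2 · P · I`. Both `P` and `I` are monotone in the
measure and the mixture dominates `p_j • μ_j`, whence `p_j² P_j I_j ≤ P I`: this is the pointwise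
bound. Integrating it against the Jordan pair of a representing measure transfers the weighted
variation bound; this needs the mixture weight to be integrable, which follows from its
measurability in `(u, t)` and its boundedness on `S^{d-1} × [-1, 1]`. -/

section WeightFunction

variable {d : ℕ} {ρ : Measure (Vec d)} {u : Vec d} {t : ℝ}

lemma measurableSet_halfSpace (u : Vec d) (t : ℝ) : MeasurableSet (halfSpace u t) :=
  measurableSet_lt measurable_const (measurable_const.inner measurable_id)

lemma setIntegral_inner_sub_nonneg (ρ : Measure (Vec d)) (u : Vec d) (t : ℝ) :
    0 ≤ ∫ x in halfSpace u t, (⟪u, x⟫ - t) ∂ρ :=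
  setIntegral_nonneg (measurableSet_halfSpace u t) fun _ hx => sub_nonneg.2 (le_of_lt hx)

lemma gTilde_eq_mul (ρ : Measure (Vec d)) (u : Vec d) (t : ℝ) :
    gTilde ρ u t = (ρ (halfSpace u t)).toReal * (∫ x in halfSpace u t, (⟪u, x⟫ - t) ∂ρ) *
      √(1 + ‖(ρ (halfSpace u t)).toReal⁻¹ • ∫ x in halfSpace u t, x ∂ρ‖ ^ 2) := by
  unfold gTilde
  congr 1
  -- this holds also when the halfspace is null, since `x / 0 = 0`
  rcases eq_or_ne (ρ (halfSpace u t)).toReal 0 with h | h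
  · simp [h]
  · field_simp

lemma gTilde_nonneg (ρ : Measure (Vec d)) (u : Vec d) (t : ℝ) : 0 ≤ gTilde ρ u t := by
  rw [gTilde_eq_mul]
  have := setIntegral_inner_sub_nonneg ρ u t
  positivity

lemma gWeight_nonneg (ρ : Measure (Vec d)) (u : Vec d) (t : ℝ) : 0 ≤ gWeight ρ u t :=
  le_min (gTilde_nonneg ρ u t) (gTilde_nonneg ρ (-u) (-t))

lemma mul_setIntegral_le_gTilde (ρ : Measure (Vec d)) (u : Vec d) (t : ℝ) :
    (ρ (halfSpace u t)).toReal * (∫ x in halfSpace u t, (⟪u, x⟫ - t) ∂ρ) ≤ gTilde ρ u t := by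
  rw [gTilde_eq_mul]
  have := setIntegral_inner_sub_nonneg ρ u t
  exact le_mul_of_one_le_right (by positivity)
    (Real.one_le_sqrt.2 (le_add_of_nonneg_right (by positivity)))

lemma norm_inv_smul_setIntegral_le_one [IsFiniteMeasure ρ] (hρ : ∀ᵐ x ∂ρ, ‖x‖ ≤ 1)
    (s : Set (Vec d)) : ‖(ρ s).toReal⁻¹ • ∫ x in s, x ∂ρ‖ ≤ 1 := by
  rcases eq_or_ne (ρ s).toReal 0 with h | h
  · simp [h]
  rw [norm_smul, norm_inv, Real.norm_of_nonneg ENNReal.toReal_nonneg,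
    inv_mul_le_one₀ (lt_of_le_of_ne ENNReal.toReal_nonneg h.symm)]
  simpa [measureReal_def] using
    norm_setIntegral_le_of_norm_le_const_ae' (measure_lt_top ρ s) (hρ.mono fun x hx _ => hx)

lemma gTilde_le_sqrt_two_mul [IsFiniteMeasure ρ] (hρ : ∀ᵐ x ∂ρ, ‖x‖ ≤ 1) (u : Vec d) (t : ℝ) :
    gTilde ρ u t ≤
      √2 * ((ρ (halfSpace u t)).toReal * ∫ x in halfSpace u t, (⟪u, x⟫ - t) ∂ρ) := by
  rw [gTilde_eq_mul, mul_comm √2]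
  have := setIntegral_inner_sub_nonneg ρ u t
  have hm := norm_inv_smul_setIntegral_le_one hρ (halfSpace u t)
  gcongr
  nlinarith [norm_nonneg ((ρ (halfSpace u t)).toReal⁻¹ • ∫ x in halfSpace u t, x ∂ρ)]

lemma gTilde_le_of_norm_le_one [IsFiniteMeasure ρ] (hρ : ∀ᵐ x ∂ρ, ‖x‖ ≤ 1) (hu : ‖u‖ ≤ 1)
    (ht : |t| ≤ 1) : gTilde ρ u t ≤ 2 * √2 * (ρ Set.univ).toReal ^ 2 := by
  set H := halfSpace u t
  have hP : (ρ H).toReal ≤ (ρ Set.univ).toReal :=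
    ENNReal.toReal_mono (measure_ne_top ρ _) (measure_mono (Set.subset_univ H))
  have hI : ∫ x in H, (⟪u, x⟫ - t) ∂ρ ≤ 2 * (ρ Set.univ).toReal := by
    have hbound : ∀ᵐ x ∂ρ, x ∈ H → ‖⟪u, x⟫ - t‖ ≤ 2 := hρ.mono fun x hx _ =>
      calc |⟪u, x⟫ - t| ≤ ‖u‖ * ‖x‖ + 1 :=
            (abs_sub _ _).trans (add_le_add (abs_real_inner_le_norm u x) ht)
        _ ≤ 2 := by nlinarith [norm_nonneg u, norm_nonneg x]
    have := norm_setIntegral_le_of_norm_le_const_ae' (measure_lt_top ρ H) hbound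
    rw [Real.norm_eq_abs, measureReal_def] at this
    linarith [le_abs_self (∫ x in H, (⟪u, x⟫ - t) ∂ρ)]
  have := setIntegral_inner_sub_nonneg ρ u t
  calc gTilde ρ u t ≤ √2 * ((ρ H).toReal * ∫ x in H, (⟪u, x⟫ - t) ∂ρ) :=
        gTilde_le_sqrt_two_mul hρ u t
    _ ≤ √2 * ((ρ Set.univ).toReal * (2 * (ρ Set.univ).toReal)) := by gcongr
    _ = 2 * √2 * (ρ Set.univ).toReal ^ 2 := by ring

end WeightFunction

section Domination

variable {d : ℕ} {ν μ : Measure (Vec d)} {c : ℝ}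

lemma mul_toReal_le_of_smul_le (hc : 0 ≤ c) (h : ENNReal.ofReal c • ν ≤ μ) [IsFiniteMeasure μ]
    (s : Set (Vec d)) : c * (ν s).toReal ≤ (μ s).toReal := by
  have := ENNReal.toReal_mono (measure_ne_top μ s) (Measure.le_iff'.1 h s)
  rwa [Measure.smul_apply, smul_eq_mul, ENNReal.toReal_mul, ENNReal.toReal_ofReal hc] at this

lemma mul_setIntegral_le_of_smul_le (hc : 0 ≤ c) (h : ENNReal.ofReal c • ν ≤ μ)
    {f : Vec d → ℝ} {s : Set (Vec d)} (hs : MeasurableSet s) (hf0 : ∀ x ∈ s, 0 ≤ f x)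
    (hf : IntegrableOn f s μ) : c * ∫ x in s, f x ∂ν ≤ ∫ x in s, f x ∂μ := by
  have := integral_mono_measure (Measure.restrict_mono subset_rfl h)
    (ae_restrict_of_forall_mem hs hf0) hf
  rwa [Measure.restrict_smul, integral_smul_measure, ENNReal.toReal_ofReal hc, smul_eq_mul]
    at this

lemma gTilde_le_of_smul_le [IsFiniteMeasure ν] [IsFiniteMeasure μ] (hc : 0 ≤ c)
    (h : ENNReal.ofReal c • ν ≤ μ) (hν : ∀ᵐ x ∂ν, ‖x‖ ≤ 1) (hμ : Integrable (fun x => x) μ)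
    (u : Vec d) (t : ℝ) : c ^ 2 / √2 * gTilde ν u t ≤ gTilde μ u t := by
  set H := halfSpace u t
  have hI := mul_setIntegral_le_of_smul_le hc h (measurableSet_halfSpace u t)
    (fun x hx => sub_nonneg.2 (le_of_lt hx))
    ((hμ.const_inner u).sub (integrable_const t)).integrableOn
  calc c ^ 2 / √2 * gTilde ν u t
      ≤ c ^ 2 / √2 * (√2 * ((ν H).toReal * ∫ x in H, (⟪u, x⟫ - t) ∂ν)) := by
        gcongr; exact gTilde_le_sqrt_two_mul hν u t
    _ = (c * (ν H).toReal) * (c * ∫ x in H, (⟪u, x⟫ - t) ∂ν) := by field_simp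
    _ ≤ (μ H).toReal * ∫ x in H, (⟪u, x⟫ - t) ∂μ := by
        have := setIntegral_inner_sub_nonneg ν u t
        exact mul_le_mul (mul_toReal_le_of_smul_le hc h H) hI (by positivity) ENNReal.toReal_nonneg
    _ ≤ gTilde μ u t := mul_setIntegral_le_gTilde μ u t

lemma gWeight_le_of_smul_le [IsFiniteMeasure ν] [IsFiniteMeasure μ] (hc : 0 ≤ c)
    (h : ENNReal.ofReal c • ν ≤ μ) (hν : ∀ᵐ x ∂ν, ‖x‖ ≤ 1) (hμ : Integrable (fun x => x) μ)
    (u : Vec d) (t : ℝ) : c ^ 2 / √2 * gWeight ν u t ≤ gWeight μ u t := by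
  rw [gWeight, mul_min_of_nonneg _ _ (by positivity)]
  exact min_le_min (gTilde_le_of_smul_le hc h hν hμ u t) (gTilde_le_of_smul_le hc h hν hμ _ _)

end Domination

section Measurability

variable {d : ℕ} {E : Type*} [NormedAddCommGroup E] [NormedSpace ℝ E]

lemma measurableSet_halfSpace_prod :
    MeasurableSet {z : (Vec d × ℝ) × Vec d | z.2 ∈ halfSpace z.1.1 z.1.2} :=
  measurableSet_lt (f := fun z : (Vec d × ℝ) × Vec d => z.1.2)
    (g := fun z => ⟪z.1.1, z.2⟫) (by fun_prop) (by fun_prop)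

lemma stronglyMeasurable_setIntegral_halfSpace (ρ : Measure (Vec d)) [SFinite ρ]
    {f : (Vec d × ℝ) × Vec d → E} (hf : StronglyMeasurable f) :
    StronglyMeasurable fun q : Vec d × ℝ => ∫ x in halfSpace q.1 q.2, f (q, x) ∂ρ := by
  simp_rw [← integral_indicator (measurableSet_halfSpace _ _)]
  exact (hf.indicator measurableSet_halfSpace_prod).integral_prod_right'

lemma measurable_uncurry_gTilde (ρ : Measure (Vec d)) [IsFiniteMeasure ρ] :
    Measurable (Function.uncurry (gTilde ρ)) := by
  have hP : Measurable fun q : Vec d × ℝ => (ρ (halfSpace q.1 q.2)).toReal :=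
    (measurable_measure_prodMk_left measurableSet_halfSpace_prod).ennreal_toReal
  have hI : Measurable fun q : Vec d × ℝ => ∫ x in halfSpace q.1 q.2, (⟪q.1, x⟫ - q.2) ∂ρ :=
    (stronglyMeasurable_setIntegral_halfSpace ρ
      (f := fun z => ⟪z.1.1, z.2⟫ - z.1.2) (by fun_prop)).measurable
  have hm : Measurable fun q : Vec d × ℝ => ∫ x in halfSpace q.1 q.2, x ∂ρ :=
    (stronglyMeasurable_setIntegral_halfSpace ρ (f := fun z => z.2) (by fun_prop)).measurable
  unfold Function.uncurry gTilde
  exact ((hP.pow_const 2).mul (hI.div hP)).mul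
    ((measurable_const.add ((hP.inv.smul hm).norm.pow_const 2)).sqrt)

lemma measurable_uncurry_gWeight (ρ : Measure (Vec d)) [IsFiniteMeasure ρ] :
    Measurable (Function.uncurry (gWeight ρ)) := by
  have h := measurable_uncurry_gTilde ρ
  have h' : Measurable fun q : Vec d × ℝ => gTilde ρ (-q.1) (-q.2) :=
    h.comp (f := fun q : Vec d × ℝ => (-q.1, -q.2)) (by fun_prop)
  exact h.min h'

end Measurability

section WeightedVariation

variable {d : ℕ} {g g' : Vec d → ℝ → ℝ} {Ω : Set (Vec d)} {M C c B : ℝ} {f : Vec d → ℝ}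

lemma VgMem.of_mul_le (hc : 0 < c) (hg : Measurable (Function.uncurry g))
    (hgB : ∀ u, ‖u‖ = 1 → ∀ t, |t| ≤ 1 → g u t ≤ B) (hg' : ∀ u t, 0 ≤ g' u t)
    (hle : ∀ u, ‖u‖ = 1 → ∀ t, c * g' u t ≤ g u t) (hf : VgMem g Ω M C f) :
    VgMem g' Ω M (C / c) f := by
  obtain ⟨hbd, νp, νm, hνp, hνm, hsp, hsm, hrepr, hvar⟩ := hf
  refine ⟨hbd, νp, νm, hνp, hνm, hsp, hsm, hrepr, ?_⟩
  have key : ∀ ν : Measure (Vec d × ℝ), IsFiniteMeasure ν →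
      ν ((Metric.sphere (0 : Vec d) 1 ×ˢ Set.Icc (-1 : ℝ) 1)ᶜ) = 0 →
      ∫ q, g' q.1 q.2 ∂ν ≤ (∫ q, g q.1 q.2 ∂ν) / c := by
    intro ν _ hν
    have hK : ∀ᵐ q ∂ν, q ∈ Metric.sphere (0 : Vec d) 1 ×ˢ Set.Icc (-1 : ℝ) 1 :=
      mem_ae_iff.2 hν
    have hcg : ∀ᵐ q ∂ν, c * g' q.1 q.2 ≤ g q.1 q.2 := hK.mono fun q hq =>
      hle q.1 (mem_sphere_zero_iff_norm.1 hq.1) q.2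
    have hint : Integrable (fun q : Vec d × ℝ => g q.1 q.2) ν :=
      Integrable.of_bound hg.aestronglyMeasurable B <| (hK.and hcg).mono fun q ⟨hq, hq'⟩ => by
        rw [Real.norm_of_nonneg ((mul_nonneg hc.le (hg' _ _)).trans hq')]
        exact hgB q.1 (mem_sphere_zero_iff_norm.1 hq.1) q.2 (abs_le.2 hq.2)
    rw [le_div_iff₀ hc, ← integral_mul_const]
    exact integral_mono_of_nonneg (ae_of_all _ fun q => mul_nonneg (hg' _ _) hc.le) hint
      (hcg.mono fun q hq => (mul_comm _ _).trans_le hq)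
  calc (∫ q, g' q.1 q.2 ∂νp) + ∫ q, g' q.1 q.2 ∂νm
      ≤ (∫ q, g q.1 q.2 ∂νp) / c + (∫ q, g q.1 q.2 ∂νm) / c :=
        add_le_add (key νp hνp hsp) (key νm hνm hsm)
    _ = ((∫ q, g q.1 q.2 ∂νp) + ∫ q, g q.1 q.2 ∂νm) / c := (add_div _ _ _).symm
    _ ≤ C / c := div_le_div_of_nonneg_right hvar hc.le

end WeightedVariation

theorem statement7_general (d J : ℕ)
    (V : Fin J → AffineSubspace ℝ (Vec d))
    (μs : Fin J → Measure (Vec d)) (hprob : ∀ j, IsProbabilityMeasure (μs j))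
    (hsupp : ∀ j, μs j (((V j : Set (Vec d)) ∩ Metric.closedBall 0 1)ᶜ) = 0)
    (p : Fin J → ℝ) (hp : ∀ j, 0 < p j)
    (μ : Measure (Vec d)) (hμ : μ = ∑ j, ENNReal.ofReal (p j) • μs j) :
    (∀ (j : Fin J) (u : Vec d), ‖u‖ = 1 → ∀ t : ℝ,
      (p j ^ 2 / Real.sqrt 2) * gWeight (μs j) u t ≤ gWeight μ u t) ∧
    (∀ (j : Fin J) (M C : ℝ), 0 < M → 0 < C →
      ∀ f : Vec d → ℝ,
        VgMem (gWeight μ) ((V j : Set (Vec d)) ∩ Metric.closedBall 0 1) M C f →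
        VgMem (gWeight (μs j)) ((V j : Set (Vec d)) ∩ Metric.closedBall 0 1) M
          (Real.sqrt 2 * C / p j ^ 2) f) := by
  have hball : ∀ j, ∀ᵐ x ∂μs j, ‖x‖ ≤ 1 := fun j => by
    filter_upwards [mem_ae_iff.2 (hsupp j)] with x hx using mem_closedBall_zero_iff.1 hx.2
  have : IsFiniteMeasure μ := by
    have := fun j => (μs j).smul_finite (ENNReal.ofReal_ne_top (r := p j))
    rw [hμ]; infer_instance
  have hμball : ∀ᵐ x ∂μ, ‖x‖ ≤ 1 :=
    hμ ▸ ae_finsetSum_measure_iff.2 fun j _ => Measure.ae_smul_measure (hball j) _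
  have hdom : ∀ j u t, p j ^ 2 / √2 * gWeight (μs j) u t ≤ gWeight μ u t := fun j =>
    gWeight_le_of_smul_le (hp j).le
      (hμ ▸ Finset.single_le_sum (fun _ _ => Measure.zero_le _) (Finset.mem_univ j))
      (hball j) (Integrable.of_bound aestronglyMeasurable_id 1 hμball)
  refine ⟨fun j u _ t => hdom j u t, fun j M C _ _ f hf => ?_⟩
  have hC : √2 * C / p j ^ 2 = C / (p j ^ 2 / √2) := by field_simp
  rw [hC]
  exact hf.of_mul_le (by have := hp j; positivity) (measurable_uncurry_gWeight μ)
    (fun u hu t ht => (min_le_left _ _).trans (gTilde_le_of_norm_le_one hμball hu.le ht))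
    (gWeight_nonneg _) (fun u _ t => hdom j u t)

/-- Lemma F.4: Global-to-local weight domination. For a mixture
`P_X = ∑ p_j P_{X,j}` whose components are supported on the unit discs of affine subspaces
(hence `‖X‖ ≤ 1` a.s. under each component), the mixture weight function dominates each
component weight function: `g(u,t) ≥ (p_j²/√2) g_j(u,t)` for all `(u,t) ∈ S^{d-1} × ℝ`.
Consequently `F_g(B_1^{V_j}; M, C) ⊆ F_{g_j}(B_1^{V_j}; M, √2 C / p_j²)`. -/
theorem statement7 (d J : ℕ) (hd : 1 < d) (hJ : 1 ≤ J)
    (V : Fin J → AffineSubspace ℝ (Vec d))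
    (μs : Fin J → Measure (Vec d)) (hprob : ∀ j, IsProbabilityMeasure (μs j))
    (hsupp : ∀ j, μs j (((V j : Set (Vec d)) ∩ Metric.closedBall 0 1)ᶜ) = 0)
    (p : Fin J → ℝ) (hp : ∀ j, 0 < p j) (hsum : ∑ j, p j = 1)
    (μ : Measure (Vec d)) (hμ : μ = ∑ j, ENNReal.ofReal (p j) • μs j) :
    (∀ (j : Fin J) (u : Vec d), ‖u‖ = 1 → ∀ t : ℝ,
      (p j ^ 2 / Real.sqrt 2) * gWeight (μs j) u t ≤ gWeight μ u t) ∧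
    (∀ (j : Fin J) (M C : ℝ), 0 < M → 0 < C →
      ∀ f : Vec d → ℝ,
        VgMem (gWeight μ) ((V j : Set (Vec d)) ∩ Metric.closedBall 0 1) M C f →
        VgMem (gWeight (μs j)) ((V j : Set (Vec d)) ∩ Metric.closedBall 0 1) M
          (Real.sqrt 2 * C / p j ^ 2) f) :=
  statement7_general d J V μs hprob hsupp p hp μ hμ

end
end

section
/- Let X ~ P_X(alpha) on R^d with d > 1, let X_d = X^T e_d, Q(t) = P(X_d > t), E(t) = E[X_d | X_d > t], and define g_alpha^+(t) = Q(t)^2 * (E(t) - t) * sqrt(1 + E(t)^2). Then there exist t_0 in [0,1) and positive constants c_L(alpha, d) and c_U(alpha, d) such that for all t in [t_0, 1): c_L(alpha, d) * (1 - t)^{2 alpha + d} <= g_alpha^+(t) <= c_U(alpha, d) * (1 - t)^{2 alpha + d}. -/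
open MeasureTheory
open scoped ENNReal RealInnerProductSpace NNReal

noncomputable section

/-- The conditional expectation `E[X_i | X_i > t]` of a coordinate projection of `μ`. -/
def condCoordMean {d : ℕ} (μ : Measure (Vec d)) (i : Fin d) (t : ℝ) : ℝ :=
  (∫ x in {x : Vec d | t < x i}, x i ∂μ) / (μ {x : Vec d | t < x i}).toReal

/-- The directional weight function `g_α^+(t) = Q(t)² (E(t) - t) √(1 + E(t)²)` of `P_X(α)`
in a coordinate direction, where `Q(t) = P(X_i > t)` and `E(t) = E[X_i | X_i > t]`. -/
def gAlphaPlus (d : ℕ) (α : ℝ) (i : Fin d) (t : ℝ) : ℝ :=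
  (alphaRadial d α {x | t < x i}).toReal ^ 2 *
    (condCoordMean (alphaRadial d α) i t - t) *
    Real.sqrt (1 + condCoordMean (alphaRadial d α) i t ^ 2)

/-!
With `Q(t) = P(X_i > t)`, `N(t) = E[(X_i - t)⁺]` and `E = E[X_i | X_i > t] ∈ [0, 1]`, one has
`g_α^+ = Q · N · √(1 + E²)`, so it suffices to show `Q(t) ≍ (1 - t)^{α + (d-1)/2}` and
`N(t) ≍ (1 - t) Q(t)` as `t → 1⁻`. Conditioning on the direction `U` gives
`Q(t) = ∫_{u_i > t} (1 - t / u_i)^α dσ(u)`, which lies between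
`((1 - t) / 2)^α σ(u_i > (1 + t) / 2)` and `(1 - t)^α σ(u_i > t)`. The cap `{u_i > s}` projects
`1`-Lipschitz onto the ball of radius `√(1 - s²)` in `ℝ^{d-1}`, and is the graph over it of a
function with slope at most `1 / s`; hence `σ(u_i > s) ≍ (1 - s²)^{(d-1)/2} ≍ (1 - s)^{(d-1)/2}`.
Since `X_i ≤ 1`, `N(t)` lies between `(1 - t) / 2 · Q((1 + t) / 2)` and `(1 - t) Q(t)`.
-/

open Set Metric Filter Topology Asymptotics

lemma eventually_one_sub_pos : ∀ᶠ t in 𝓝[<] (1 : ℝ), 0 < 1 - t :=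
  eventually_nhdsWithin_of_forall fun _ ht => sub_pos.2 ht

lemma tendsto_midpoint_one_nhdsLT :
    Tendsto (fun t : ℝ => (1 + t) / 2) (𝓝[<] 1) (𝓝[<] 1) := by
  refine tendsto_nhdsWithin_of_tendsto_nhds_of_eventually_within _ ?_ ?_
  · have : Continuous fun t : ℝ => (1 + t) / 2 := by fun_prop
    simpa using (this.tendsto 1).mono_left nhdsWithin_le_nhds
  · filter_upwards [self_mem_nhdsWithin] with t (ht : t < 1)
    show (1 + t) / 2 < 1
    linarith

namespace Asymptotics

lemma isTheta_of_le_of_le {ι : Type*} {l : Filter ι} {f g lo hi : ι → ℝ} (hlo : lo =Θ[l] g)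
    (hhi : hi =Θ[l] g) (h0 : 0 ≤ᶠ[l] lo) (hlof : lo ≤ᶠ[l] f) (hfhi : f ≤ᶠ[l] hi) :
    f =Θ[l] g := by
  refine ⟨Eventually.trans_isBigO ?_ hhi.1,
    hlo.2.trans (Eventually.trans_isBigO ?_ (isBigO_refl f l))⟩
  · filter_upwards [h0, hlof, hfhi] with x h0 hlof hfhi
    rw [Real.norm_of_nonneg (h0.trans hlof), Real.norm_of_nonneg (h0.trans (hlof.trans hfhi))]
    exact hfhi
  · filter_upwards [h0, hlof] with x h0 hlof
    rw [Real.norm_of_nonneg h0, Real.norm_of_nonneg (h0.trans hlof)]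
    exact hlof

lemma isTheta_const_mul_one_sub_rpow {c : ℝ} (hc : 0 < c) (p : ℝ) :
    (fun t => (c * (1 - t)) ^ p) =Θ[𝓝[<] 1] fun t => (1 - t) ^ p := by
  refine EventuallyEq.trans_isTheta ?_
    ((isTheta_refl _ _).const_mul_left (Real.rpow_pos_of_pos hc p).ne')
  filter_upwards [eventually_one_sub_pos] with t ht
  exact Real.mul_rpow hc.le ht.le

lemma IsTheta.one_sub_rpow_mul {f g : ℝ → ℝ} {a b : ℝ}
    (hf : f =Θ[𝓝[<] 1] fun t => (1 - t) ^ a) (hg : g =Θ[𝓝[<] 1] fun t => (1 - t) ^ b) :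
    (fun t => f t * g t) =Θ[𝓝[<] 1] fun t => (1 - t) ^ (a + b) := by
  refine (hf.mul hg).trans_eventuallyEq ?_
  filter_upwards [eventually_one_sub_pos] with t ht
  exact (Real.rpow_add ht a b).symm

lemma IsTheta.comp_midpoint_one {f : ℝ → ℝ} {p : ℝ}
    (hf : f =Θ[𝓝[<] 1] fun t => (1 - t) ^ p) :
    (fun t => f ((1 + t) / 2)) =Θ[𝓝[<] 1] fun t => (1 - t) ^ p := by
  have hhalf : (fun t => (1 - t) ^ p) ∘ (fun t : ℝ => (1 + t) / 2) =
      fun t => (2⁻¹ * (1 - t)) ^ p := by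
    ext t; simp only [Function.comp_apply]; ring_nf
  have h : (fun t => f ((1 + t) / 2)) =Θ[𝓝[<] 1] fun t => (2⁻¹ * (1 - t)) ^ p := by
    rw [← hhalf]
    exact ⟨hf.1.comp_tendsto tendsto_midpoint_one_nhdsLT,
      hf.2.comp_tendsto tendsto_midpoint_one_nhdsLT⟩
  exact h.trans (isTheta_const_mul_one_sub_rpow (by norm_num) p)

lemma IsTheta.exists_Ico_bounds {f : ℝ → ℝ} {p : ℝ}
    (h : f =Θ[𝓝[<] 1] fun t => (1 - t) ^ p) (hf : 0 ≤ᶠ[𝓝[<] 1] f) :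
    ∃ t₀ ∈ Ico (0 : ℝ) 1, ∃ cL : ℝ, 0 < cL ∧ ∃ cU : ℝ, 0 < cU ∧
      ∀ t ∈ Ico t₀ 1, cL * (1 - t) ^ p ≤ f t ∧ f t ≤ cU * (1 - t) ^ p := by
  obtain ⟨cU, hcU, hU⟩ := h.1.exists_pos
  obtain ⟨c, hc, hL⟩ := h.2.exists_pos
  have hev : ∀ᶠ t in 𝓝[<] (1 : ℝ), c⁻¹ * (1 - t) ^ p ≤ f t ∧ f t ≤ cU * (1 - t) ^ p := by
    filter_upwards [hU.bound, hL.bound, hf, eventually_one_sub_pos] with t hU hL hf ht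
    rw [Real.norm_of_nonneg hf, Real.norm_of_nonneg (Real.rpow_nonneg ht.le p)] at hU hL
    exact ⟨by rwa [inv_mul_le_iff₀ hc], hU⟩
  obtain ⟨l, hl, hsub⟩ := mem_nhdsLT_iff_exists_Ico_subset.1 hev
  exact ⟨max l 0, ⟨le_max_right _ _, max_lt hl one_pos⟩, c⁻¹, inv_pos.2 hc, cU, hcU,
    fun t ht => hsub ⟨(le_max_left _ _).trans ht.1, ht.2⟩⟩

end Asymptotics

namespace PoweredRadial

variable {n : ℕ}

section TailFunctionals

variable {d : ℕ} {μ : Measure (Vec d)} {i : Fin d} {t : ℝ}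

def tailProb (μ : Measure (Vec d)) (i : Fin d) (t : ℝ) : ℝ := (μ {x | t < x i}).toReal

def meanExcess (μ : Measure (Vec d)) (i : Fin d) (t : ℝ) : ℝ := ∫ x in {x | t < x i}, (x i - t) ∂μ

lemma abs_apply_le_norm (x : Vec d) (i : Fin d) : |x i| ≤ ‖x‖ := by
  simpa using PiLp.norm_apply_le x i

lemma measurableSet_coord_gt (i : Fin d) (t : ℝ) : MeasurableSet {x : Vec d | t < x i} :=
  measurableSet_lt measurable_const (by fun_prop)

lemma meanExcess_nonneg : 0 ≤ meanExcess μ i t :=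
  setIntegral_nonneg (measurableSet_coord_gt i t) fun _ hx => sub_nonneg.2 (le_of_lt hx)

lemma condCoordMean_nonneg (ht : 0 ≤ t) : 0 ≤ condCoordMean μ i t :=
  div_nonneg (setIntegral_nonneg (measurableSet_coord_gt i t) fun _ hx => ht.trans (le_of_lt hx))
    ENNReal.toReal_nonneg

variable [IsFiniteMeasure μ]

lemma integrable_coord (h1 : ∀ᵐ x ∂μ, ‖x‖ ≤ 1) (i : Fin d) :
    Integrable (fun x : Vec d => x i) μ :=
  .of_bound (by fun_prop) 1 (h1.mono fun x hx => (abs_apply_le_norm x i).trans hx)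

lemma condCoordMean_le_one (h1 : ∀ᵐ x ∂μ, ‖x‖ ≤ 1) : condCoordMean μ i t ≤ 1 := by
  refine div_le_one_of_le₀ ?_ ENNReal.toReal_nonneg
  calc ∫ x in {x | t < x i}, x i ∂μ ≤ ∫ _ in {x : Vec d | t < x i}, (1 : ℝ) ∂μ :=
        setIntegral_mono_ae (integrable_coord h1 i).integrableOn (integrable_const _)
          (h1.mono fun x hx => (le_abs_self _).trans ((abs_apply_le_norm x i).trans hx))
    _ = (μ {x | t < x i}).toReal := by simp [measureReal_def]

lemma tailProb_sq_mul_condCoordMean_sub (h1 : ∀ᵐ x ∂μ, ‖x‖ ≤ 1) :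
    tailProb μ i t ^ 2 * (condCoordMean μ i t - t) = tailProb μ i t * meanExcess μ i t := by
  have hsplit : meanExcess μ i t = ∫ x in {x | t < x i}, x i ∂μ - t * tailProb μ i t := by
    rw [meanExcess, integral_sub (integrable_coord h1 i).integrableOn (integrable_const t),
      setIntegral_const, smul_eq_mul, measureReal_def, mul_comm, tailProb]
  rw [hsplit, condCoordMean, ← tailProb]
  rcases eq_or_ne (tailProb μ i t) 0 with hQ | hQ
  · simp [hQ]
  · field_simp

lemma meanExcess_le (h1 : ∀ᵐ x ∂μ, ‖x‖ ≤ 1) : meanExcess μ i t ≤ (1 - t) * tailProb μ i t := by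
  calc meanExcess μ i t ≤ ∫ _ in {x : Vec d | t < x i}, (1 - t) ∂μ :=
        setIntegral_mono_ae ((integrable_coord h1 i).sub (integrable_const t)).integrableOn
          (integrable_const _)
          (h1.mono fun x hx => by
            linarith [(le_abs_self (x i)).trans ((abs_apply_le_norm x i).trans hx)])
    _ = (1 - t) * tailProb μ i t := by
        rw [setIntegral_const, smul_eq_mul, measureReal_def, mul_comm, tailProb]

lemma le_meanExcess (h1 : ∀ᵐ x ∂μ, ‖x‖ ≤ 1) (ht : t ≤ 1) :
    2⁻¹ * (1 - t) * tailProb μ i ((1 + t) / 2) ≤ meanExcess μ i t := by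
  have hsub : {x : Vec d | (1 + t) / 2 < x i} ⊆ {x | t < x i} := fun x (hx : _ < x i) =>
    show t < x i by linarith
  have hint : Integrable (fun x : Vec d => x i - t) μ :=
    (integrable_coord h1 i).sub (integrable_const t)
  calc 2⁻¹ * (1 - t) * tailProb μ i ((1 + t) / 2)
      = ∫ _ in {x : Vec d | (1 + t) / 2 < x i}, 2⁻¹ * (1 - t) ∂μ := by
        rw [setIntegral_const, smul_eq_mul, measureReal_def, mul_comm, tailProb]
    _ ≤ ∫ x in {x : Vec d | (1 + t) / 2 < x i}, (x i - t) ∂μ :=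
        setIntegral_mono_on (integrable_const _) hint.integrableOn (measurableSet_coord_gt i _)
          fun x (hx : _ < x i) => by linarith
    _ ≤ meanExcess μ i t :=
        setIntegral_mono_set hint.integrableOn
          ((ae_restrict_mem (measurableSet_coord_gt i t)).mono fun x (hx : t < x i) =>
            sub_nonneg.2 hx.le)
          (Eventually.of_forall hsub)

end TailFunctionals

def insertCoord (i : Fin (n + 1)) (c : ℝ) (y : Vec n) : Vec (n + 1) :=
  WithLp.toLp 2 (Fin.insertNth i c y.ofLp)

def removeCoord (i : Fin (n + 1)) (x : Vec (n + 1)) : Vec n :=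
  WithLp.toLp 2 fun k => x (i.succAbove k)

@[simp] lemma insertCoord_apply_self (i : Fin (n + 1)) (c : ℝ) (y : Vec n) :
    insertCoord i c y i = c :=
  Fin.insertNth_apply_same (α := fun _ => ℝ) i c y.ofLp

@[simp] lemma insertCoord_apply_succAbove (i : Fin (n + 1)) (c : ℝ) (y : Vec n) (k : Fin n) :
    insertCoord i c y (i.succAbove k) = y k :=
  Fin.insertNth_apply_succAbove (α := fun _ => ℝ) i c y.ofLp k

@[simp] lemma removeCoord_apply (i : Fin (n + 1)) (x : Vec (n + 1)) (k : Fin n) :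
    removeCoord i x k = x (i.succAbove k) := rfl

@[simp] lemma removeCoord_insertCoord (i : Fin (n + 1)) (c : ℝ) (y : Vec n) :
    removeCoord i (insertCoord i c y) = y := by
  ext k; simp

lemma insertCoord_removeCoord (i : Fin (n + 1)) (x : Vec (n + 1)) :
    insertCoord i (x i) (removeCoord i x) = x :=
  congrArg (WithLp.toLp 2) (Fin.insertNth_self_removeNth (α := fun _ => ℝ) i x.ofLp)

lemma removeCoord_sub (i : Fin (n + 1)) (x x' : Vec (n + 1)) :
    removeCoord i (x - x') = removeCoord i x - removeCoord i x' := rfl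

lemma norm_sq_eq_sq_add_norm_removeCoord_sq (i : Fin (n + 1)) (x : Vec (n + 1)) :
    ‖x‖ ^ 2 = x i ^ 2 + ‖removeCoord i x‖ ^ 2 := by
  simp [EuclideanSpace.real_norm_sq_eq, Fin.sum_univ_succAbove _ i]

lemma norm_insertCoord_sub_sq (i : Fin (n + 1)) (c c' : ℝ) (y y' : Vec n) :
    ‖insertCoord i c y - insertCoord i c' y'‖ ^ 2 = (c - c') ^ 2 + ‖y - y'‖ ^ 2 := by
  rw [norm_sq_eq_sq_add_norm_removeCoord_sq i, removeCoord_sub]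
  simp

lemma lipschitzWith_removeCoord (i : Fin (n + 1)) : LipschitzWith 1 (removeCoord i) := by
  refine LipschitzWith.of_dist_le_mul fun x x' => ?_
  rw [dist_eq_norm, dist_eq_norm, NNReal.coe_one, one_mul, ← removeCoord_sub]
  refine le_of_sq_le_sq ?_ (norm_nonneg _)
  rw [norm_sq_eq_sq_add_norm_removeCoord_sq i (x - x')]
  nlinarith

def sphereGraph (i : Fin (n + 1)) (y : Vec n) : Vec (n + 1) := insertCoord i √(1 - ‖y‖ ^ 2) y

lemma sphereGraph_apply_self (i : Fin (n + 1)) (y : Vec n) :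
    sphereGraph i y i = √(1 - ‖y‖ ^ 2) :=
  insertCoord_apply_self i _ y

lemma removeCoord_sphereGraph (i : Fin (n + 1)) (y : Vec n) : removeCoord i (sphereGraph i y) = y :=
  removeCoord_insertCoord i _ y

lemma norm_sphereGraph {y : Vec n} (hy : ‖y‖ ≤ 1) (i : Fin (n + 1)) : ‖sphereGraph i y‖ = 1 := by
  have h := norm_sq_eq_sq_add_norm_removeCoord_sq i (sphereGraph i y)
  rw [sphereGraph_apply_self, removeCoord_sphereGraph,
    Real.sq_sqrt (by nlinarith [norm_nonneg y]), sub_add_cancel] at h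
  exact (pow_left_inj₀ (norm_nonneg _) zero_le_one two_ne_zero).1 (by simpa using h)

lemma abs_sqrt_one_sub_sq_sub_le {a b s : ℝ} (ha : 0 ≤ a) (hb : 0 ≤ b)
    (has : a ^ 2 ≤ 1 - s ^ 2) (hbs : b ^ 2 ≤ 1 - s ^ 2) :
    s * |√(1 - a ^ 2) - √(1 - b ^ 2)| ≤ √(1 - s ^ 2) * |a - b| := by
  set A := √(1 - a ^ 2)
  set B := √(1 - b ^ 2)
  have hsA : s ≤ A := Real.le_sqrt_of_sq_le (by linarith)
  have hsB : s ≤ B := Real.le_sqrt_of_sq_le (by linarith)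
  have haρ : a ≤ √(1 - s ^ 2) := Real.le_sqrt_of_sq_le has
  have hbρ : b ≤ √(1 - s ^ 2) := Real.le_sqrt_of_sq_le hbs
  -- `(A - B)(A + B) = b² - a²`, with `A + B ≥ 2 s` and `a + b ≤ 2 √(1 - s²)`
  have hdiff : |A - B| * (A + B) = |a - b| * (a + b) := by
    rw [← abs_of_nonneg (by positivity : 0 ≤ A + B), ← abs_of_nonneg (by positivity : 0 ≤ a + b),
      ← abs_mul, ← abs_mul]
    have hA : A ^ 2 = 1 - a ^ 2 := Real.sq_sqrt (by nlinarith)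
    have hB : B ^ 2 = 1 - b ^ 2 := Real.sq_sqrt (by nlinarith)
    rw [show (A - B) * (A + B) = -((a - b) * (a + b)) by linear_combination hA - hB, abs_neg]
  nlinarith [abs_nonneg (A - B), abs_nonneg (a - b)]

lemma lipschitzOnWith_sphereGraph (i : Fin (n + 1)) {s : ℝ} (hs : 0 < s) (hs1 : s ≤ 1) :
    LipschitzOnWith (Real.toNNReal s⁻¹) (sphereGraph i) (closedBall 0 √(1 - s ^ 2)) := by
  refine LipschitzOnWith.of_dist_le' fun y hy y' hy' => ?_
  rw [mem_closedBall_zero_iff] at hy hy'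
  have hs2 : 0 ≤ 1 - s ^ 2 := by nlinarith
  have hy2 : ‖y‖ ^ 2 ≤ 1 - s ^ 2 := (Real.le_sqrt (norm_nonneg _) hs2).1 hy
  have hy2' : ‖y'‖ ^ 2 ≤ 1 - s ^ 2 := (Real.le_sqrt (norm_nonneg _) hs2).1 hy'
  have hheight := abs_sqrt_one_sub_sq_sub_le (norm_nonneg y) (norm_nonneg y') hy2 hy2'
  have hnorm : (‖y‖ - ‖y'‖) ^ 2 ≤ ‖y - y'‖ ^ 2 :=
    sq_le_sq.2 ((abs_norm_sub_norm_le y y').trans (le_abs_self _))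
  have hslope : s ^ 2 * (√(1 - ‖y‖ ^ 2) - √(1 - ‖y'‖ ^ 2)) ^ 2 ≤ (1 - s ^ 2) * ‖y - y'‖ ^ 2 := by
    calc s ^ 2 * (√(1 - ‖y‖ ^ 2) - √(1 - ‖y'‖ ^ 2)) ^ 2
        = (s * |√(1 - ‖y‖ ^ 2) - √(1 - ‖y'‖ ^ 2)|) ^ 2 := by rw [mul_pow, sq_abs]
      _ ≤ (√(1 - s ^ 2) * |‖y‖ - ‖y'‖|) ^ 2 := pow_le_pow_left₀ (by positivity) hheight 2
      _ = (1 - s ^ 2) * (‖y‖ - ‖y'‖) ^ 2 := by rw [mul_pow, Real.sq_sqrt hs2, sq_abs]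
      _ ≤ (1 - s ^ 2) * ‖y - y'‖ ^ 2 := by gcongr
  rw [dist_eq_norm, dist_eq_norm, ← div_eq_inv_mul, le_div_iff₀ hs]
  refine le_of_sq_le_sq ?_ (norm_nonneg _)
  rw [mul_pow, sphereGraph, sphereGraph, norm_insertCoord_sub_sq]
  linarith

lemma coord_ge_inter_sphere_subset_image_sphereGraph (i : Fin (n + 1)) {s : ℝ} (hs : 0 ≤ s) :
    {u : Vec (n + 1) | s ≤ u i} ∩ sphere 0 1 ⊆ sphereGraph i '' closedBall 0 √(1 - s ^ 2) := by
  rintro u ⟨hsu, hu⟩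
  rw [mem_sphere_zero_iff_norm] at hu
  have hsum := norm_sq_eq_sq_add_norm_removeCoord_sq i u
  rw [hu] at hsum
  refine ⟨removeCoord i u, ?_, ?_⟩
  · rw [mem_closedBall_zero_iff]
    exact Real.le_sqrt_of_sq_le (by nlinarith [hsu.out])
  · rw [sphereGraph, show 1 - ‖removeCoord i u‖ ^ 2 = u i ^ 2 by linarith,
      Real.sqrt_sq (hs.trans hsu), insertCoord_removeCoord]

lemma ball_subset_image_removeCoord (i : Fin (n + 1)) (s : ℝ) :
    ball 0 √(1 - s ^ 2) ⊆ removeCoord i '' ({u : Vec (n + 1) | s < u i} ∩ sphere 0 1) := by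
  intro y hy
  rw [mem_ball_zero_iff] at hy
  have hy2 : ‖y‖ ^ 2 < 1 - s ^ 2 :=
    (Real.lt_sqrt (norm_nonneg y)).1 hy
  refine ⟨sphereGraph i y, ⟨?_, ?_⟩, removeCoord_sphereGraph i y⟩
  · show s < sphereGraph i y i
    rw [sphereGraph_apply_self]
    exact Real.lt_sqrt_of_sq_lt (by linarith)
  · rw [mem_sphere_zero_iff_norm]
    exact norm_sphereGraph (by nlinarith [norm_nonneg y]) i

instance isAddHaarMeasure_hausdorffMeasure_vec : (μH[n] : Measure (Vec n)).IsAddHaarMeasure := by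
  simpa using isAddHaarMeasure_hausdorffMeasure (E := Vec n)

lemma le_hausdorffMeasure_coord_gt_inter_sphere (i : Fin (n + 1)) {s : ℝ} (hs : 0 ≤ s)
    (hs1 : s < 1) :
    ENNReal.ofReal (√(1 - s ^ 2) ^ n) * μH[n] (ball (0 : Vec n) 1) ≤
      μH[n] ({u : Vec (n + 1) | s < u i} ∩ sphere 0 1) := by
  have hρ : 0 < √(1 - s ^ 2) := Real.sqrt_pos.2 (by nlinarith)
  calc ENNReal.ofReal (√(1 - s ^ 2) ^ n) * μH[n] (ball (0 : Vec n) 1)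
      = μH[n] (ball (0 : Vec n) √(1 - s ^ 2)) := by
        rw [Measure.addHaar_ball_of_pos μH[n] _ hρ, finrank_euclideanSpace_fin]
    _ ≤ μH[n] (removeCoord i '' ({u : Vec (n + 1) | s < u i} ∩ sphere 0 1)) :=
        measure_mono (ball_subset_image_removeCoord i s)
    _ ≤ μH[n] ({u : Vec (n + 1) | s < u i} ∩ sphere 0 1) := by
        simpa using (lipschitzWith_removeCoord i).hausdorffMeasure_image_le (Nat.cast_nonneg n) _

lemma hausdorffMeasure_coord_ge_inter_sphere_le (i : Fin (n + 1)) {s : ℝ} (hs : 0 < s)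
    (hs1 : s ≤ 1) :
    μH[n] ({u : Vec (n + 1) | s ≤ u i} ∩ sphere 0 1) ≤
      ENNReal.ofReal ((√(1 - s ^ 2) / s) ^ n) * μH[n] (ball (0 : Vec n) 1) := by
  calc μH[n] ({u : Vec (n + 1) | s ≤ u i} ∩ sphere 0 1)
      ≤ μH[n] (sphereGraph i '' closedBall 0 √(1 - s ^ 2)) :=
        measure_mono (coord_ge_inter_sphere_subset_image_sphereGraph i hs.le)
    _ ≤ (Real.toNNReal s⁻¹ : ℝ≥0∞) ^ (n : ℝ) * μH[n] (closedBall (0 : Vec n) √(1 - s ^ 2)) :=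
        (lipschitzOnWith_sphereGraph i hs hs1).hausdorffMeasure_image_le (Nat.cast_nonneg n)
    _ = ENNReal.ofReal ((√(1 - s ^ 2) / s) ^ n) * μH[n] (ball (0 : Vec n) 1) := by
        rw [Measure.addHaar_closedBall _ _ (Real.sqrt_nonneg _), finrank_euclideanSpace_fin,
          ← mul_assoc, ENNReal.rpow_natCast, ← ENNReal.ofReal_coe_nnreal,
          Real.coe_toNNReal _ (inv_nonneg.2 hs.le), ← ENNReal.ofReal_pow (inv_nonneg.2 hs.le),
          ← ENNReal.ofReal_mul (by positivity), div_eq_inv_mul, mul_pow]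

lemma hausdorffMeasure_sphere_pos : 0 < μH[n] (sphere (0 : Vec (n + 1)) 1) := by
  have hball : 0 < μH[n] (ball (0 : Vec n) 1) := measure_ball_pos _ _ one_pos
  calc 0 < ENNReal.ofReal (√(1 - 0 ^ 2) ^ n) * μH[n] (ball (0 : Vec n) 1) := by
        simpa using hball
    _ ≤ μH[n] ({u : Vec (n + 1) | 0 < u 0} ∩ sphere 0 1) :=
        le_hausdorffMeasure_coord_gt_inter_sphere 0 le_rfl one_pos
    _ ≤ μH[n] (sphere (0 : Vec (n + 1)) 1) := measure_mono inter_subset_right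

/-- Every unit vector has a coordinate of absolute value at least `1 / (n + 1)`, so the sphere is
covered by finitely many caps and their reflections. -/
lemma hausdorffMeasure_sphere_lt_top : μH[n] (sphere (0 : Vec (n + 1)) 1) < ∞ := by
  set m : ℝ := 1 / (n + 1)
  have hm : 0 < m := by positivity
  have hm1 : m ≤ 1 := div_le_one_of_le₀ (by simp) (by positivity)
  set C : Fin (n + 1) → Set (Vec (n + 1)) := fun j => {u | m ≤ u j} ∩ sphere 0 1
  have hcover : sphere (0 : Vec (n + 1)) 1 ⊆ ⋃ j, (C j ∪ Neg.neg ⁻¹' C j) := by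
    intro u hu
    have hnorm : ‖u‖ = 1 := mem_sphere_zero_iff_norm.1 hu
    have hsum : ∑ j, u j ^ 2 = ∑ _j : Fin (n + 1), m := by
      rw [← EuclideanSpace.real_norm_sq_eq, hnorm, Finset.sum_const, Finset.card_univ,
        Fintype.card_fin, nsmul_eq_mul, Nat.cast_succ, mul_one_div_cancel (by positivity), one_pow]
    obtain ⟨j, -, hj⟩ := Finset.exists_le_of_sum_le Finset.univ_nonempty hsum.ge
    have hj1 : |u j| ≤ 1 := hnorm ▸ abs_apply_le_norm u j
    have hmj : m ≤ |u j| := by nlinarith [sq_abs (u j), abs_nonneg (u j)]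
    refine mem_iUnion.2 ⟨j, ?_⟩
    rcases le_abs'.1 hmj with h | h
    · exact Or.inr ⟨by simpa [le_neg] using h, by simpa using hu⟩
    · exact Or.inl ⟨h, hu⟩
  have hcap : ∀ j, μH[n] (C j) < ∞ := fun j =>
    (hausdorffMeasure_coord_ge_inter_sphere_le j hm hm1).trans_lt
      (ENNReal.mul_lt_top ENNReal.ofReal_lt_top measure_ball_lt_top)
  refine (measure_mono hcover).trans_lt ((measure_iUnion_fintype_le _ _).trans_lt ?_)
  refine ENNReal.sum_lt_top.2 fun j _ => (measure_union_le _ _).trans_lt ?_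
  rw [show Neg.neg ⁻¹' C j =
      (LinearIsometryEquiv.neg ℝ : Vec (n + 1) ≃ₗᵢ[ℝ] _).toIsometryEquiv ⁻¹' C j from rfl,
    IsometryEquiv.hausdorffMeasure_preimage]
  exact ENNReal.add_lt_top.2 ⟨hcap j, hcap j⟩

lemma sphereUnif_succ_apply (A : Set (Vec (n + 1))) :
    sphereUnif (n + 1) A =
      (μH[n] (sphere (0 : Vec (n + 1)) 1))⁻¹ * μH[n] (A ∩ sphere 0 1) := by
  have hdim : ((n + 1 : ℕ) : ℝ) - 1 = n := by push_cast; ring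
  rw [sphereUnif, hdim, Measure.smul_apply, smul_eq_mul,
    Measure.restrict_apply' isClosed_sphere.measurableSet]

instance : IsProbabilityMeasure (sphereUnif (n + 1)) :=
  ⟨by
    rw [sphereUnif_succ_apply, univ_inter]
    exact ENNReal.inv_mul_cancel hausdorffMeasure_sphere_pos.ne' hausdorffMeasure_sphere_lt_top.ne⟩

lemma ae_norm_eq_one_sphereUnif (d : ℕ) : ∀ᵐ u ∂sphereUnif d, ‖u‖ = 1 :=
  Measure.ae_smul_measure ((ae_restrict_mem isClosed_sphere.measurableSet).mono
    fun _ hu => mem_sphere_zero_iff_norm.1 hu) _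

def sphereCapConst (n : ℕ) : ℝ :=
  (μH[n] (ball (0 : Vec n) 1)).toReal / (μH[n] (sphere (0 : Vec (n + 1)) 1)).toReal

lemma sphereCapConst_pos : 0 < sphereCapConst n :=
  div_pos (ENNReal.toReal_pos (measure_ball_pos _ _ one_pos).ne' measure_ball_lt_top.ne)
    (ENNReal.toReal_pos hausdorffMeasure_sphere_pos.ne' hausdorffMeasure_sphere_lt_top.ne)

lemma tailProb_sphereUnif (i : Fin (n + 1)) (s : ℝ) :
    tailProb (sphereUnif (n + 1)) i s =
      (μH[n] ({u : Vec (n + 1) | s < u i} ∩ sphere 0 1)).toReal /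
        (μH[n] (sphere (0 : Vec (n + 1)) 1)).toReal := by
  rw [tailProb, sphereUnif_succ_apply, ENNReal.toReal_mul, ENNReal.toReal_inv, inv_mul_eq_div]

lemma le_tailProb_sphereUnif (i : Fin (n + 1)) {s : ℝ} (hs : 0 ≤ s) (hs1 : s < 1) :
    sphereCapConst n * √(1 - s ^ 2) ^ n ≤ tailProb (sphereUnif (n + 1)) i s := by
  have hcap_ne_top : μH[n] ({u : Vec (n + 1) | s < u i} ∩ sphere 0 1) ≠ ∞ :=
    (measure_mono inter_subset_right).trans_lt hausdorffMeasure_sphere_lt_top |>.ne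
  have h := ENNReal.toReal_mono hcap_ne_top (le_hausdorffMeasure_coord_gt_inter_sphere i hs hs1)
  rw [ENNReal.toReal_mul, ENNReal.toReal_ofReal (by positivity)] at h
  rw [tailProb_sphereUnif, sphereCapConst, div_mul_eq_mul_div]
  gcongr
  linarith

lemma tailProb_sphereUnif_le (i : Fin (n + 1)) {s : ℝ} (hs : 0 < s) (hs1 : s ≤ 1) :
    tailProb (sphereUnif (n + 1)) i s ≤ sphereCapConst n * (√(1 - s ^ 2) / s) ^ n := by
  have hsub : {u : Vec (n + 1) | s < u i} ⊆ {u | s ≤ u i} := fun u (hu : s < u i) => hu.le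
  have hcap := (measure_mono (inter_subset_inter_left _ hsub)).trans
    (hausdorffMeasure_coord_ge_inter_sphere_le i hs hs1)
  have h := ENNReal.toReal_mono (ENNReal.mul_ne_top ENNReal.ofReal_ne_top
    measure_ball_lt_top.ne) hcap
  rw [ENNReal.toReal_mul, ENNReal.toReal_ofReal (by positivity)] at h
  rw [tailProb_sphereUnif, sphereCapConst, div_mul_eq_mul_div]
  gcongr
  linarith

lemma sqrt_pow_eq_rpow {x : ℝ} (hx : 0 ≤ x) (n : ℕ) : √x ^ n = x ^ ((n : ℝ) / 2) := by
  rw [Real.sqrt_eq_rpow, ← Real.rpow_mul_natCast hx, one_div_mul_eq_div]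

lemma isTheta_tailProb_sphereUnif (i : Fin (n + 1)) :
    tailProb (sphereUnif (n + 1)) i =Θ[𝓝[<] 1] fun s => (1 - s) ^ ((n : ℝ) / 2) := by
  have hκ := sphereCapConst_pos (n := n)
  have hmid : ∀ᶠ s in 𝓝[<] (1 : ℝ), s ∈ Ioo (1 / 2) 1 := Ioo_mem_nhdsLT (by norm_num)
  refine isTheta_of_le_of_le ((isTheta_refl _ _).const_mul_left hκ.ne')
    (((isTheta_const_mul_one_sub_rpow two_pos _).const_mul_left
      (pow_pos two_pos n).ne').const_mul_left hκ.ne') ?_ ?_ ?_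
  · filter_upwards [eventually_one_sub_pos] with s hs
    positivity
  · filter_upwards [hmid] with s ⟨hs, hs1⟩
    refine le_trans ?_ (le_tailProb_sphereUnif i (by linarith) hs1)
    rw [sqrt_pow_eq_rpow (by nlinarith)]
    gcongr
    nlinarith
  · filter_upwards [hmid] with s ⟨hs, hs1⟩
    refine (tailProb_sphereUnif_le i (by linarith) hs1.le).trans ?_
    have h1s : 0 ≤ 1 - s ^ 2 := by nlinarith
    calc sphereCapConst n * (√(1 - s ^ 2) / s) ^ n
        ≤ sphereCapConst n * (2 * √(1 - s ^ 2)) ^ n := by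
          gcongr
          rw [div_le_iff₀ (by linarith)]
          nlinarith [Real.sqrt_nonneg (1 - s ^ 2)]
      _ ≤ sphereCapConst n * (2 ^ n * (2 * (1 - s)) ^ ((n : ℝ) / 2)) := by
          rw [mul_pow, sqrt_pow_eq_rpow h1s]
          gcongr
          nlinarith

section AlphaRadial

variable {α : ℝ}

def radialProfile (α r : ℝ) : ℝ := 1 - (1 - r) ^ (1 / α)

lemma alphaRadial_eq (d : ℕ) (α : ℝ) :
    alphaRadial d α = ((volume.restrict (Icc (0 : ℝ) 1)).prod (sphereUnif d)).map
      fun p => radialProfile α p.1 • p.2 := rfl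

lemma measurable_radialMap (d : ℕ) (α : ℝ) :
    Measurable fun p : ℝ × Vec d => radialProfile α p.1 • p.2 := by
  unfold radialProfile; fun_prop

lemma radialProfile_mem_Icc (hα : 0 < α) {r : ℝ} (hr : r ∈ Icc (0 : ℝ) 1) :
    radialProfile α r ∈ Icc (0 : ℝ) 1 := by
  have h0 : 0 ≤ 1 - r := by linarith [hr.2]
  have hpow : (1 - r) ^ (1 / α) ≤ 1 := Real.rpow_le_one h0 (by linarith [hr.1]) (by positivity)
  have hnonneg : 0 ≤ (1 - r) ^ (1 / α) := Real.rpow_nonneg h0 _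
  exact ⟨by unfold radialProfile; linarith, by unfold radialProfile; linarith⟩

lemma volume_lt_radialProfile_mul_of_lt (hα : 0 < α) {t a : ℝ} (ht : 0 ≤ t) (hta : t < a) :
    volume.restrict (Icc (0 : ℝ) 1) {r | t < radialProfile α r * a} =
      ENNReal.ofReal ((1 - t / a) ^ α) := by
  have ha0 : 0 < a := ht.trans_lt hta
  have hq0 : 0 ≤ 1 - t / a := sub_nonneg.2 ((div_le_one ha0).2 hta.le)
  have hq1 : (1 - t / a) ^ α ≤ 1 :=
    Real.rpow_le_one hq0 (by linarith [div_nonneg ht ha0.le]) hα.le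
  have hset : {r | t < radialProfile α r * a} ∩ Icc 0 1 = Ioc (1 - (1 - t / a) ^ α) 1 := by
    ext r
    simp only [mem_inter_iff, mem_ofPred_eq, mem_Icc, mem_Ioc, radialProfile]
    constructor
    · rintro ⟨h, -, hr1⟩
      have h' : (1 - r) ^ α⁻¹ < 1 - t / a := by
        rw [← one_div]; linarith [(div_lt_iff₀ ha0).2 h]
      rw [Real.rpow_inv_lt_iff_of_pos (by linarith) hq0 hα] at h'
      exact ⟨by linarith, hr1⟩
    · rintro ⟨h, hr1⟩
      have h' : (1 - r) ^ α⁻¹ < 1 - t / a :=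
        (Real.rpow_inv_lt_iff_of_pos (by linarith) hq0 hα).2 (by linarith)
      rw [← one_div] at h'
      refine ⟨(div_lt_iff₀ ha0).1 (by linarith), by linarith, hr1⟩
  rw [Measure.restrict_apply' measurableSet_Icc, hset, Real.volume_Ioc, sub_sub_cancel]

lemma volume_lt_radialProfile_mul_of_le (hα : 0 < α) {t a : ℝ} (ht : 0 ≤ t) (hat : a ≤ t) :
    volume.restrict (Icc (0 : ℝ) 1) {r | t < radialProfile α r * a} = 0 := by
  have hempty : {r | t < radialProfile α r * a} ∩ Icc 0 1 = ∅ := by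
    refine eq_empty_of_forall_notMem fun r ⟨h, hr⟩ => ?_
    obtain ⟨h0, h1⟩ := radialProfile_mem_Icc hα hr
    nlinarith [h.out]
  rw [Measure.restrict_apply' measurableSet_Icc, hempty, measure_empty]

instance : IsProbabilityMeasure (volume.restrict (Icc (0 : ℝ) 1)) := ⟨by simp⟩

instance : IsProbabilityMeasure (alphaRadial (n + 1) α) :=
  Measure.isProbabilityMeasure_map (measurable_radialMap _ _).aemeasurable

lemma ae_norm_le_one_alphaRadial (hα : 0 < α) : ∀ᵐ x ∂alphaRadial (n + 1) α, ‖x‖ ≤ 1 := by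
  rw [alphaRadial_eq, ae_map_iff (measurable_radialMap _ _).aemeasurable
    (measurableSet_le measurable_norm measurable_const)]
  filter_upwards [Measure.quasiMeasurePreserving_fst.ae (ae_restrict_mem measurableSet_Icc),
    Measure.quasiMeasurePreserving_snd.ae (ae_norm_eq_one_sphereUnif (n + 1))] with p hr hu
  obtain ⟨h0, h1⟩ := radialProfile_mem_Icc hα hr
  rwa [norm_smul, hu, mul_one, Real.norm_of_nonneg h0]

lemma alphaRadial_coord_gt_eq_lintegral (hα : 0 < α) (i : Fin (n + 1)) {t : ℝ} (ht : 0 ≤ t) :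
    alphaRadial (n + 1) α {x | t < x i} =
      ∫⁻ u in {u | t < u i}, ENNReal.ofReal ((1 - t / u i) ^ α) ∂sphereUnif (n + 1) := by
  rw [alphaRadial_eq, Measure.map_apply (measurable_radialMap _ _) (measurableSet_coord_gt i t),
    Measure.prod_apply_symm (measurable_radialMap _ _ (measurableSet_coord_gt i t)),
    ← lintegral_indicator (measurableSet_coord_gt i t)]
  refine lintegral_congr fun u => ?_
  have hslice : (fun r => (r, u)) ⁻¹' ((fun p : ℝ × Vec (n + 1) => radialProfile α p.1 • p.2) ⁻¹'
      {x | t < x i}) = {r | t < radialProfile α r * u i} := rfl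
  rw [hslice]
  by_cases htu : t < u i
  · rw [indicator_of_mem (show u ∈ {x : Vec (n + 1) | t < x i} from htu)]
    exact volume_lt_radialProfile_mul_of_lt hα ht htu
  · rw [indicator_of_notMem (show u ∉ {x : Vec (n + 1) | t < x i} from htu)]
    exact volume_lt_radialProfile_mul_of_le hα ht (not_lt.1 htu)

lemma tailProb_alphaRadial_le (hα : 0 < α) (i : Fin (n + 1)) {t : ℝ} (ht : 0 ≤ t) (ht1 : t ≤ 1) :
    tailProb (alphaRadial (n + 1) α) i t ≤ (1 - t) ^ α * tailProb (sphereUnif (n + 1)) i t := by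
  have h : alphaRadial (n + 1) α {x | t < x i} ≤
      ENNReal.ofReal ((1 - t) ^ α) * sphereUnif (n + 1) {u | t < u i} := by
    rw [alphaRadial_coord_gt_eq_lintegral hα i ht, ← setLIntegral_const]
    refine lintegral_mono_ae ?_
    filter_upwards [ae_restrict_mem (measurableSet_coord_gt i t),
      ae_restrict_of_ae (ae_norm_eq_one_sphereUnif (n + 1))] with u (htu : t < u i) hu
    have hu0 : 0 < u i := ht.trans_lt htu
    have hu1 : u i ≤ 1 := (le_abs_self _).trans (hu ▸ abs_apply_le_norm u i)
    refine ENNReal.ofReal_le_ofReal (Real.rpow_le_rpow ?_ ?_ hα.le)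
    · exact sub_nonneg.2 ((div_le_one hu0).2 htu.le)
    · linarith [le_div_self ht hu0 hu1]
  have h' :=
    ENNReal.toReal_mono (ENNReal.mul_ne_top ENNReal.ofReal_ne_top (measure_ne_top _ _)) h
  rwa [ENNReal.toReal_mul, ENNReal.toReal_ofReal (Real.rpow_nonneg (by linarith) _)] at h'

lemma le_tailProb_alphaRadial (hα : 0 < α) (i : Fin (n + 1)) {t : ℝ} (ht : 0 ≤ t) (ht1 : t ≤ 1) :
    (2⁻¹ * (1 - t)) ^ α * tailProb (sphereUnif (n + 1)) i ((1 + t) / 2) ≤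
      tailProb (alphaRadial (n + 1) α) i t := by
  have hsub : {u : Vec (n + 1) | (1 + t) / 2 < u i} ⊆ {u | t < u i} := fun u (hu : _ < u i) =>
    show t < u i by linarith
  have h : ENNReal.ofReal ((2⁻¹ * (1 - t)) ^ α) * sphereUnif (n + 1) {u | (1 + t) / 2 < u i} ≤
      alphaRadial (n + 1) α {x | t < x i} := by
    rw [alphaRadial_coord_gt_eq_lintegral hα i ht, ← setLIntegral_const]
    refine le_trans ?_ (lintegral_mono_set hsub)
    refine lintegral_mono_ae ?_
    filter_upwards [ae_restrict_mem (measurableSet_coord_gt i ((1 + t) / 2))] with u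
      (hu : _ < u i)
    have hu0 : 0 < u i := by linarith
    refine ENNReal.ofReal_le_ofReal (Real.rpow_le_rpow (by linarith) ?_ hα.le)
    -- `u i · (1 + t) / 2 ≥ ((1 + t) / 2) ^ 2 ≥ t`
    have : t / u i ≤ (1 + t) / 2 := by
      rw [div_le_iff₀ hu0]
      nlinarith [sq_nonneg (1 - t)]
    linarith
  have h' := ENNReal.toReal_mono (measure_ne_top _ _) h
  rwa [ENNReal.toReal_mul, ENNReal.toReal_ofReal (Real.rpow_nonneg (by linarith) _)] at h'

lemma isTheta_tailProb_alphaRadial (hα : 0 < α) (i : Fin (n + 1)) :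
    tailProb (alphaRadial (n + 1) α) i =Θ[𝓝[<] 1] fun t => (1 - t) ^ (α + n / 2) := by
  have hσ := isTheta_tailProb_sphereUnif (n := n) i
  have hunit : ∀ᶠ t in 𝓝[<] (1 : ℝ), t ∈ Ioo 0 1 := Ioo_mem_nhdsLT one_pos
  refine isTheta_of_le_of_le
    ((isTheta_const_mul_one_sub_rpow (by norm_num : (0 : ℝ) < 2⁻¹) α).one_sub_rpow_mul
      hσ.comp_midpoint_one)
    ((isTheta_refl _ _).one_sub_rpow_mul hσ) ?_ ?_ ?_
  · filter_upwards [hunit] with t ⟨_, ht1⟩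
    exact mul_nonneg (Real.rpow_nonneg (by linarith) α) ENNReal.toReal_nonneg
  · filter_upwards [hunit] with t ⟨ht, ht1⟩
    exact le_tailProb_alphaRadial hα i ht.le ht1.le
  · filter_upwards [hunit] with t ⟨ht, ht1⟩
    exact tailProb_alphaRadial_le hα i ht.le ht1.le

lemma isTheta_meanExcess_alphaRadial (hα : 0 < α) (i : Fin (n + 1)) :
    meanExcess (alphaRadial (n + 1) α) i =Θ[𝓝[<] 1] fun t => (1 - t) ^ (1 + (α + n / 2)) := by
  have hQ := isTheta_tailProb_alphaRadial hα i
  have h1 := ae_norm_le_one_alphaRadial (n := n) hα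
  have hhalf : (fun t : ℝ => 2⁻¹ * (1 - t)) =Θ[𝓝[<] 1] fun t => (1 - t) ^ (1 : ℝ) := by
    simpa only [Real.rpow_one] using
      isTheta_const_mul_one_sub_rpow (by norm_num : (0 : ℝ) < 2⁻¹) 1
  have hid : (fun t : ℝ => 1 - t) =Θ[𝓝[<] 1] fun t => (1 - t) ^ (1 : ℝ) := by
    simpa only [Real.rpow_one] using isTheta_refl (fun t : ℝ => 1 - t) (𝓝[<] 1)
  refine isTheta_of_le_of_le (hhalf.one_sub_rpow_mul hQ.comp_midpoint_one)
    (hid.one_sub_rpow_mul hQ) ?_ ?_ ?_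
  · filter_upwards [eventually_one_sub_pos] with t ht
    exact mul_nonneg (by positivity) ENNReal.toReal_nonneg
  · filter_upwards [eventually_one_sub_pos] with t ht
    exact le_meanExcess h1 (by linarith)
  · exact Eventually.of_forall fun t => meanExcess_le h1

lemma gAlphaPlus_eq (hα : 0 < α) (i : Fin (n + 1)) (t : ℝ) :
    gAlphaPlus (n + 1) α i t = tailProb (alphaRadial (n + 1) α) i t *
      meanExcess (alphaRadial (n + 1) α) i t *
        √(1 + condCoordMean (alphaRadial (n + 1) α) i t ^ 2) := by
  rw [gAlphaPlus, ← tailProb, tailProb_sq_mul_condCoordMean_sub (ae_norm_le_one_alphaRadial hα)]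

lemma gAlphaPlus_nonneg (hα : 0 < α) (i : Fin (n + 1)) (t : ℝ) : 0 ≤ gAlphaPlus (n + 1) α i t := by
  rw [gAlphaPlus_eq hα]
  exact mul_nonneg (mul_nonneg ENNReal.toReal_nonneg meanExcess_nonneg) (Real.sqrt_nonneg _)

lemma isTheta_gAlphaPlus (hα : 0 < α) (i : Fin (n + 1)) :
    gAlphaPlus (n + 1) α i =Θ[𝓝[<] 1] fun t => (1 - t) ^ (2 * α + ((n + 1 : ℕ) : ℝ)) := by
  have hE : ∀ᶠ t in 𝓝[<] (1 : ℝ), condCoordMean (alphaRadial (n + 1) α) i t ∈ Icc 0 1 := by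
    filter_upwards [Ioo_mem_nhdsLT one_pos] with t ⟨ht, _⟩
    exact ⟨condCoordMean_nonneg ht.le, condCoordMean_le_one (ae_norm_le_one_alphaRadial hα)⟩
  have hconst : ∀ c : ℝ, c ≠ 0 → (fun _ : ℝ => c) =Θ[𝓝[<] 1] fun t => (1 - t) ^ (0 : ℝ) := by
    intro c hc
    simpa only [Real.rpow_zero] using isTheta_const_const (l := 𝓝[<] (1 : ℝ)) hc one_ne_zero
  have hsqrt : (fun t => √(1 + condCoordMean (alphaRadial (n + 1) α) i t ^ 2)) =Θ[𝓝[<] 1]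
      fun t => (1 - t) ^ (0 : ℝ) := by
    refine isTheta_of_le_of_le (hconst 1 one_ne_zero) (hconst √2 (by positivity))
      (Eventually.of_forall fun _ => zero_le_one) ?_ ?_
    · exact Eventually.of_forall fun t => Real.one_le_sqrt.2 (le_add_of_nonneg_right (sq_nonneg _))
    · filter_upwards [hE] with t ⟨h0, h1⟩
      exact Real.sqrt_le_sqrt (by nlinarith)
  have h := ((isTheta_tailProb_alphaRadial hα i).one_sub_rpow_mul
    (isTheta_meanExcess_alphaRadial hα i)).one_sub_rpow_mul hsqrt
  rwa [show α + n / 2 + (1 + (α + n / 2)) + 0 = 2 * α + ((n + 1 : ℕ) : ℝ) by push_cast; ring,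
    ← funext (gAlphaPlus_eq hα i)] at h

end AlphaRadial

end PoweredRadial

open PoweredRadial in
theorem statement12_general (d : ℕ) (α : ℝ) (hα : 0 < α) (i : Fin d) :
    ∃ t₀ ∈ Set.Ico (0 : ℝ) 1, ∃ cL : ℝ, 0 < cL ∧ ∃ cU : ℝ, 0 < cU ∧
      ∀ t ∈ Set.Ico t₀ 1,
        cL * (1 - t) ^ (2 * α + (d : ℝ)) ≤ gAlphaPlus d α i t ∧
          gAlphaPlus d α i t ≤ cU * (1 - t) ^ (2 * α + (d : ℝ)) := by
  obtain ⟨n, rfl⟩ := Nat.exists_eq_add_one_of_ne_zero (Fin.pos i).ne'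
  exact (isTheta_gAlphaPlus hα i).exists_Ico_bounds
    (Eventually.of_forall (gAlphaPlus_nonneg hα i))

/-- Proposition G.3: asymptotic behavior of the weight function. There
are `t₀ ∈ [0,1)` and positive constants `c_L(α,d), c_U(α,d)` such that for all
`t ∈ [t₀, 1)`, `c_L (1-t)^{2α+d} ≤ g_α^+(t) ≤ c_U (1-t)^{2α+d}`. -/
theorem statement12 (d : ℕ) (hd : 1 < d) (α : ℝ) (hα : 0 < α) (i : Fin d) :
    ∃ t₀ ∈ Set.Ico (0 : ℝ) 1, ∃ cL : ℝ, 0 < cL ∧ ∃ cU : ℝ, 0 < cU ∧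
      ∀ t ∈ Set.Ico t₀ 1,
        cL * (1 - t) ^ (2 * α + (d : ℝ)) ≤ gAlphaPlus d α i t ∧
          gAlphaPlus d α i t ≤ cU * (1 - t) ^ (2 * α + (d : ℝ)) :=
  statement12_general d α hα i

end
end

section
/- For epsilon in (0, 1/2] and u in S^{d-1} (d > 1), define the thin spherical cap C(u, epsilon) = {x in B_1^d : u^T x > 1 - epsilon^2}, where B_1^d is the closed unit ball of R^d. Then there exist positive constants depending only on d and alpha such that the mass of the cap satisfies c_1(d, alpha) * epsilon^{d - 1 + 2 alpha} <= P_X(alpha)(C(u, epsilon)) <= c_2(d, alpha) * epsilon^{d - 1 + 2 alpha}. -/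
open MeasureTheory
open scoped ENNReal RealInnerProductSpace NNReal

noncomputable section

/-
Write `X = h(R) • U`. Up to constant factors in `ε`, the point `X` lies in `C(u, ε)` exactly when
`h(R) > 1 - Θ(ε²)` and `U` lies in the spherical cap `{⟪u, U⟫ > 1 - Θ(ε²)}`, so by independence
the mass factors into a radial and an angular part. The radial part is
`P(1 - R < Θ(ε^{2α})) ≍ ε^{2α}`. The angular part is the normalized `(d-1)`-dimensional Hausdorff
measure of a cap of width `≍ ε`, hence `≍ ε^{d-1}`: the (1-Lipschitz) orthogonal projection onto
`uᗮ` maps the cap onto a set containing a ball of radius `ε`, and the cap is the image of a ball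
of radius `√2 ε` under the graph map `y ↦ y + √(1 - ‖y‖²) u`, which is 3-Lipschitz near `0`.
-/

open Metric Set

section SphereCap

variable {E : Type*} [NormedAddCommGroup E] [InnerProductSpace ℝ E] {u : E}

def sphereCap (u : E) (ρ : ℝ) : Set E := sphere 0 1 ∩ {x | 1 - ρ ^ 2 < ⟪u, x⟫}

def hemisphereGraph (u : E) (y : (ℝ ∙ u)ᗮ) : E := (y : E) + √(1 - ‖y‖ ^ 2) • u

theorem orthogonalProjectionOnto_hemisphereGraph (y : (ℝ ∙ u)ᗮ) :
    (ℝ ∙ u)ᗮ.orthogonalProjectionOnto (hemisphereGraph u y) = y := by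
  simp [hemisphereGraph]

theorem inner_hemisphereGraph (hu : ‖u‖ = 1) (y : (ℝ ∙ u)ᗮ) :
    ⟪u, hemisphereGraph u y⟫ = √(1 - ‖y‖ ^ 2) := by
  simp [hemisphereGraph, inner_add_right, inner_smul_right, hu,
    Submodule.mem_orthogonal_singleton_iff_inner_right.mp y.2]

theorem norm_hemisphereGraph (hu : ‖u‖ = 1) {y : (ℝ ∙ u)ᗮ} (hy : ‖y‖ ≤ 1) :
    ‖hemisphereGraph u y‖ = 1 := by
  have horth : ⟪(y : E), √(1 - ‖y‖ ^ 2) • u⟫ = 0 := by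
    rw [real_inner_smul_right, real_inner_comm,
      Submodule.mem_orthogonal_singleton_iff_inner_right.mp y.2, mul_zero]
  have hsq : ‖hemisphereGraph u y‖ * ‖hemisphereGraph u y‖ = 1 := by
    rw [hemisphereGraph, norm_add_sq_eq_norm_sq_add_norm_sq_of_inner_eq_zero _ _ horth,
      norm_smul, hu, mul_one, Real.norm_of_nonneg (Real.sqrt_nonneg _),
      Real.mul_self_sqrt (by nlinarith [norm_nonneg y]), Submodule.coe_norm]
    ring
  nlinarith [norm_nonneg (hemisphereGraph u y)]

theorem inner_smul_add_orthogonalProjectionOnto_orthogonal_singleton (hu : ‖u‖ = 1) (x : E) :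
    ⟪u, x⟫ • u + (ℝ ∙ u)ᗮ.orthogonalProjectionOnto x = x := by
  rw [Submodule.coe_orthogonalProjectionOnto_apply, ← Submodule.starProjection_unit_singleton ℝ hu,
    Submodule.starProjection_add_starProjection_orthogonal]

theorem norm_sq_orthogonalProjectionOnto_orthogonal_singleton (hu : ‖u‖ = 1) (x : E) :
    ‖(ℝ ∙ u)ᗮ.orthogonalProjectionOnto x‖ ^ 2 = ‖x‖ ^ 2 - ⟪u, x⟫ ^ 2 := by
  have h := Submodule.norm_sq_eq_add_norm_sq_starProjection x (ℝ ∙ u)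
  rw [Submodule.starProjection_unit_singleton ℝ hu, norm_smul, hu, mul_one,
    Real.norm_eq_abs, sq_abs, Submodule.starProjection_apply] at h
  norm_cast at h
  linarith

theorem hemisphereGraph_orthogonalProjectionOnto (hu : ‖u‖ = 1) {x : E} (hx : ‖x‖ = 1)
    (hx0 : 0 ≤ ⟪u, x⟫) : hemisphereGraph u ((ℝ ∙ u)ᗮ.orthogonalProjectionOnto x) = x := by
  rw [hemisphereGraph, norm_sq_orthogonalProjectionOnto_orthogonal_singleton hu, hx, one_pow,
    sub_sub_cancel, Real.sqrt_sq hx0, add_comm]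
  exact inner_smul_add_orthogonalProjectionOnto_orthogonal_singleton hu x

theorem abs_sqrt_sub_sqrt_le {a b : ℝ} (ha : 1 / 4 ≤ a) (hb : 1 / 4 ≤ b) :
    |√a - √b| ≤ |a - b| := by
  have hsum : 1 ≤ √a + √b := by
    have h₁ : (1 / 2 : ℝ) ≤ √a := Real.le_sqrt_of_sq_le (by linarith)
    have h₂ : (1 / 2 : ℝ) ≤ √b := Real.le_sqrt_of_sq_le (by linarith)
    linarith
  have hprod : |√a - √b| * (√a + √b) = |a - b| := by
    rw [← abs_of_pos (by linarith : 0 < √a + √b), ← abs_mul]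
    congr 1
    nlinarith [Real.sq_sqrt (by linarith : 0 ≤ a), Real.sq_sqrt (by linarith : 0 ≤ b)]
  nlinarith [abs_nonneg (√a - √b)]

theorem lipschitzOnWith_hemisphereGraph (hu : ‖u‖ = 1) :
    LipschitzOnWith 3 (hemisphereGraph u) {y | ‖y‖ ^ 2 ≤ 1 / 2} := by
  refine LipschitzOnWith.of_dist_le_mul fun y hy y' hy' => ?_
  simp only [mem_ofPred_eq] at hy hy'
  have hsqrt : |√(1 - ‖y‖ ^ 2) - √(1 - ‖y'‖ ^ 2)| ≤ 2 * ‖y - y'‖ := by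
    refine (abs_sqrt_sub_sqrt_le (by linarith) (by linarith)).trans ?_
    have h := abs_norm_sub_norm_le y y'
    have hy1 : ‖y‖ ≤ 1 := by nlinarith [norm_nonneg y]
    have hy1' : ‖y'‖ ≤ 1 := by nlinarith [norm_nonneg y']
    rw [show 1 - ‖y‖ ^ 2 - (1 - ‖y'‖ ^ 2) = (‖y'‖ - ‖y‖) * (‖y'‖ + ‖y‖) by ring, abs_mul,
      abs_sub_comm, abs_of_nonneg (by positivity : 0 ≤ ‖y'‖ + ‖y‖)]
    nlinarith [abs_nonneg (‖y‖ - ‖y'‖)]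
  calc dist (hemisphereGraph u y) (hemisphereGraph u y')
      = ‖((y - y' : (ℝ ∙ u)ᗮ) : E) + (√(1 - ‖y‖ ^ 2) - √(1 - ‖y'‖ ^ 2)) • u‖ := by
        rw [dist_eq_norm, hemisphereGraph, hemisphereGraph, Submodule.coe_sub, sub_smul]
        congr 1; abel
    _ ≤ ‖y - y'‖ + |√(1 - ‖y‖ ^ 2) - √(1 - ‖y'‖ ^ 2)| := by
        refine (norm_add_le _ _).trans ?_
        simp only [norm_smul, hu, mul_one, Real.norm_eq_abs, Submodule.coe_norm, le_refl]
    _ ≤ (3 : ℝ≥0) * dist y y' := by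
        rw [dist_eq_norm]; push_cast; linarith

theorem ball_subset_image_orthogonalProjectionOnto_sphereCap (hu : ‖u‖ = 1) {ρ : ℝ}
    (hρ : ρ ≤ 1) :
    ball (0 : (ℝ ∙ u)ᗮ) ρ ⊆ (ℝ ∙ u)ᗮ.orthogonalProjectionOnto '' sphereCap u ρ := by
  intro y hy
  rw [mem_ball_zero_iff] at hy
  have hy1 : ‖y‖ ≤ 1 := by linarith
  have hyρ : ‖y‖ ^ 2 < ρ ^ 2 := by nlinarith [norm_nonneg y]
  refine ⟨hemisphereGraph u y, ⟨?_, ?_⟩, orthogonalProjectionOnto_hemisphereGraph y⟩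
  · rw [mem_sphere_zero_iff_norm]
    exact norm_hemisphereGraph hu hy1
  · have h0 : 0 ≤ 1 - ‖y‖ ^ 2 := by nlinarith [norm_nonneg y]
    have hle : 1 - ‖y‖ ^ 2 ≤ √(1 - ‖y‖ ^ 2) :=
      Real.le_sqrt_of_sq_le (by nlinarith [norm_nonneg y])
    rw [mem_ofPred_eq, inner_hemisphereGraph hu]
    linarith

theorem sphereCap_subset_image_hemisphereGraph (hu : ‖u‖ = 1) {ρ : ℝ} (hρ0 : 0 ≤ ρ)
    (hρ1 : ρ ≤ 1) : sphereCap u ρ ⊆ hemisphereGraph u '' closedBall 0 (√2 * ρ) := by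
  rintro x ⟨hx, hux⟩
  rw [mem_sphere_zero_iff_norm] at hx
  rw [mem_ofPred_eq] at hux
  have hρ2 : 0 ≤ 1 - ρ ^ 2 := by nlinarith
  refine ⟨_, ?_, hemisphereGraph_orthogonalProjectionOnto hu hx (by linarith)⟩
  rw [mem_closedBall_zero_iff, ← Real.sqrt_sq (norm_nonneg _), ← Real.sqrt_sq hρ0,
    ← Real.sqrt_mul zero_le_two]
  refine Real.sqrt_le_sqrt ?_
  rw [norm_sq_orthogonalProjectionOnto_orthogonal_singleton hu, hx]
  nlinarith

end SphereCap

section HausdorffMeasureSphereCap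

variable {E : Type*} [NormedAddCommGroup E] [InnerProductSpace ℝ E] [MeasurableSpace E]
  [BorelSpace E] {n : ℕ} {u : E}

theorem hausdorffMeasure_ball_orthogonal_span_singleton (hE : Module.finrank ℝ E = n + 1)
    (hu : u ≠ 0) (d r : ℝ) :
    μH[d] (ball (0 : (ℝ ∙ u)ᗮ) r) = μH[d] (ball (0 : EuclideanSpace ℝ (Fin n)) r) := by
  have : Fact (Module.finrank ℝ E = n + 1) := ⟨hE⟩
  set e := (OrthonormalBasis.fromOrthogonalSpanSingleton (𝕜 := ℝ) n hu).repr
  rw [← e.isometry.hausdorffMeasure_image (Or.inr e.surjective), e.image_ball, map_zero]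

theorem hausdorffMeasure_closedBall_orthogonal_span_singleton (hE : Module.finrank ℝ E = n + 1)
    (hu : u ≠ 0) (d r : ℝ) :
    μH[d] (closedBall (0 : (ℝ ∙ u)ᗮ) r) =
      μH[d] (closedBall (0 : EuclideanSpace ℝ (Fin n)) r) := by
  have : Fact (Module.finrank ℝ E = n + 1) := ⟨hE⟩
  set e := (OrthonormalBasis.fromOrthogonalSpanSingleton (𝕜 := ℝ) n hu).repr
  rw [← e.isometry.hausdorffMeasure_image (Or.inr e.surjective), e.image_closedBall, map_zero]

theorem le_hausdorffMeasure_sphereCap (hE : Module.finrank ℝ E = n + 1) (hu : ‖u‖ = 1) {ρ : ℝ}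
    (hρ0 : 0 < ρ) (hρ1 : ρ ≤ 1) :
    ENNReal.ofReal (ρ ^ n) * μH[n] (ball (0 : EuclideanSpace ℝ (Fin n)) 1) ≤
      μH[n] (sphereCap u ρ) := by
  have hπ := (ℝ ∙ u)ᗮ.lipschitzWith_orthogonalProjectionOnto.hausdorffMeasure_image_le
    (Nat.cast_nonneg n) (sphereCap u ρ)
  calc ENNReal.ofReal (ρ ^ n) * μH[n] (ball (0 : EuclideanSpace ℝ (Fin n)) 1)
      = μH[n] (ball (0 : (ℝ ∙ u)ᗮ) ρ) := by
        rw [hausdorffMeasure_ball_orthogonal_span_singleton hE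
            (norm_ne_zero_iff.1 (hu.trans_ne one_ne_zero)), Measure.addHaar_ball_of_pos _ _ hρ0, finrank_euclideanSpace_fin]
    _ ≤ μH[n] ((ℝ ∙ u)ᗮ.orthogonalProjectionOnto '' sphereCap u ρ) :=
        measure_mono (ball_subset_image_orthogonalProjectionOnto_sphereCap hu hρ1)
    _ ≤ μH[n] (sphereCap u ρ) := by simpa using hπ

theorem hausdorffMeasure_sphereCap_le (hE : Module.finrank ℝ E = n + 1) (hu : ‖u‖ = 1) {ρ : ℝ}
    (hρ0 : 0 ≤ ρ) (hρ : ρ ≤ 1 / 2) :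
    μH[n] (sphereCap u ρ) ≤
      ENNReal.ofReal ((3 * √2 * ρ) ^ n) * μH[n] (ball (0 : EuclideanSpace ℝ (Fin n)) 1) := by
  have hdom : closedBall (0 : (ℝ ∙ u)ᗮ) (√2 * ρ) ⊆ {y | ‖y‖ ^ 2 ≤ 1 / 2} := by
    intro y hy
    rw [mem_closedBall_zero_iff] at hy
    have hsq : ‖y‖ ^ 2 ≤ (√2 * ρ) ^ 2 := pow_le_pow_left₀ (norm_nonneg y) hy 2
    rw [mul_pow, Real.sq_sqrt zero_le_two] at hsq
    rw [mem_ofPred_eq]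
    nlinarith
  calc μH[n] (sphereCap u ρ)
      ≤ μH[n] (hemisphereGraph u '' closedBall 0 (√2 * ρ)) :=
        measure_mono (sphereCap_subset_image_hemisphereGraph hu hρ0 (by linarith))
    _ ≤ (3 : ℝ≥0∞) ^ (n : ℝ) * μH[n] (closedBall (0 : (ℝ ∙ u)ᗮ) (√2 * ρ)) := by
        simpa using ((lipschitzOnWith_hemisphereGraph hu).mono hdom).hausdorffMeasure_image_le
          (Nat.cast_nonneg n)
    _ = ENNReal.ofReal ((3 * √2 * ρ) ^ n) * μH[n] (ball (0 : EuclideanSpace ℝ (Fin n)) 1) := by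
        rw [hausdorffMeasure_closedBall_orthogonal_span_singleton hE
            (norm_ne_zero_iff.1 (hu.trans_ne one_ne_zero)),
          Measure.addHaar_closedBall _ _ (by positivity), finrank_euclideanSpace_fin, ← mul_assoc,
          ENNReal.rpow_natCast]
        congr 1
        rw [← ENNReal.ofReal_ofNat 3, ← ENNReal.ofReal_pow zero_le_three,
          ← ENNReal.ofReal_mul (by positivity), ← mul_pow, mul_assoc]

theorem hausdorffMeasure_sphere_pos (hE : Module.finrank ℝ E = n + 1) :
    0 < μH[n] (sphere (0 : E) 1) := by
  have : Nontrivial E := Module.nontrivial_of_finrank_eq_succ hE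
  obtain ⟨u, hu⟩ := exists_norm_eq E zero_le_one
  refine lt_of_lt_of_le ?_ ((le_hausdorffMeasure_sphereCap hE hu one_pos le_rfl).trans
    (measure_mono inter_subset_left))
  simpa using measure_ball_pos μH[n] (0 : EuclideanSpace ℝ (Fin n)) one_pos

theorem hausdorffMeasure_sphere_lt_top (hE : Module.finrank ℝ E = n + 1) :
    μH[n] (sphere (0 : E) 1) < ∞ := by
  have : FiniteDimensional ℝ E := Module.finite_of_finrank_eq_succ hE
  refine (isCompact_sphere 0 1).measure_lt_top_of_nhdsWithin fun u hu => ?_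
  rw [mem_sphere_zero_iff_norm] at hu
  refine ⟨sphereCap u (1 / 2), inter_mem_nhdsWithin _ (IsOpen.mem_nhds ?_ ?_),
    (hausdorffMeasure_sphereCap_le hE hu (by norm_num) le_rfl).trans_lt
      (ENNReal.mul_lt_top ENNReal.ofReal_lt_top measure_ball_lt_top)⟩
  · exact isOpen_lt continuous_const (by fun_prop)
  · rw [mem_ofPred_eq, real_inner_self_eq_norm_sq, hu]
    norm_num

end HausdorffMeasureSphereCap

instance isFiniteMeasure_sphereUnif (d : ℕ) : IsFiniteMeasure (sphereUnif d) := by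
  refine ⟨lt_of_le_of_lt ?_ ENNReal.one_lt_top⟩
  rw [sphereUnif, Measure.smul_apply, Measure.restrict_apply_univ, smul_eq_mul]
  exact ENNReal.inv_mul_le_one _

theorem sphereUnif_compl_sphere (d : ℕ) : sphereUnif d (sphere 0 1)ᶜ = 0 := by
  rw [sphereUnif, Measure.smul_apply, Measure.restrict_apply' isClosed_sphere.measurableSet,
    compl_inter_self, measure_empty, smul_zero]

theorem sphereUnif_succ_apply (n : ℕ) (s : Set (Vec (n + 1))) :
    sphereUnif (n + 1) s = (μH[n] (sphere (0 : Vec (n + 1)) 1))⁻¹ * μH[n] (s ∩ sphere 0 1) := by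
  rw [sphereUnif, Measure.smul_apply, Measure.restrict_apply' isClosed_sphere.measurableSet,
    smul_eq_mul, Nat.cast_succ, add_sub_cancel_right]

theorem exists_sphereUnif_sphereCap_bounds (n : ℕ) :
    ∃ κ : ℝ, 0 < κ ∧ ∀ u : Vec (n + 1), ‖u‖ = 1 → ∀ ρ : ℝ, 0 < ρ → ρ ≤ 1 / 2 →
      ENNReal.ofReal (κ * ρ ^ n) ≤ sphereUnif (n + 1) (sphereCap u ρ) ∧
        sphereUnif (n + 1) (sphereCap u ρ) ≤ ENNReal.ofReal (κ * (3 * √2 * ρ) ^ n) := by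
  have hE : Module.finrank ℝ (Vec (n + 1)) = n + 1 := finrank_euclideanSpace_fin
  set s := μH[n] (sphere (0 : Vec (n + 1)) 1)
  set c := μH[n] (ball (0 : EuclideanSpace ℝ (Fin n)) 1)
  have hκ0 : s⁻¹ * c ≠ 0 :=
    mul_ne_zero (ENNReal.inv_ne_zero.2 (hausdorffMeasure_sphere_lt_top hE).ne)
      (measure_ball_pos _ _ one_pos).ne'
  have hκtop : s⁻¹ * c ≠ ∞ :=
    ENNReal.mul_ne_top (ENNReal.inv_ne_top.2 (hausdorffMeasure_sphere_pos hE).ne')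
      measure_ball_lt_top.ne
  refine ⟨(s⁻¹ * c).toReal, ENNReal.toReal_pos hκ0 hκtop, fun u hu ρ hρ0 hρ1 => ?_⟩
  have hσ : sphereUnif (n + 1) (sphereCap u ρ) = s⁻¹ * μH[n] (sphereCap u ρ) := by
    have hS : sphereCap u ρ ⊆ sphere 0 1 := inter_subset_left
    rw [sphereUnif_succ_apply, inter_eq_left.2 hS]
  have hconst : ∀ t : ℝ,
      ENNReal.ofReal ((s⁻¹ * c).toReal * t) = s⁻¹ * (ENNReal.ofReal t * c) := by
    intro t
    rw [ENNReal.ofReal_mul ENNReal.toReal_nonneg, ENNReal.ofReal_toReal hκtop]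
    ring
  rw [hσ, hconst, hconst]
  constructor <;> gcongr
  exacts [le_hausdorffMeasure_sphereCap hE hu hρ0 (by linarith),
    hausdorffMeasure_sphereCap_le hE hu hρ0.le hρ1]

section RadialLaw

def radialProfile (α r : ℝ) : ℝ := 1 - (1 - r) ^ (1 / α)

theorem radialProfile_le_one (α : ℝ) {r : ℝ} (hr : r ≤ 1) : radialProfile α r ≤ 1 := by
  have := Real.rpow_nonneg (sub_nonneg.2 hr) (1 / α)
  rw [radialProfile]
  linarith

theorem radialProfile_nonneg {α r : ℝ} (hα : 0 < α) (hr0 : 0 ≤ r) (hr1 : r ≤ 1) :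
    0 ≤ radialProfile α r := by
  have := Real.rpow_le_one (sub_nonneg.2 hr1) (by linarith) (one_div_pos.2 hα).le
  rw [radialProfile]
  linarith

theorem one_sub_lt_radialProfile_iff {α r t : ℝ} (hα : 0 < α) (hr : r ≤ 1) (ht : 0 ≤ t) :
    1 - t < radialProfile α r ↔ 1 - r < t ^ α := by
  rw [radialProfile, sub_lt_sub_iff_left, one_div,
    Real.rpow_inv_lt_iff_of_pos (sub_nonneg.2 hr) ht hα]

theorem measurable_radialProfile_smul {E : Type*} [NormedAddCommGroup E] [NormedSpace ℝ E]
    [MeasurableSpace E] [BorelSpace E] (α : ℝ) :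
    Measurable fun p : ℝ × E => radialProfile α p.1 • p.2 := by
  unfold radialProfile
  fun_prop

variable {d : ℕ}

def radialLaw (α : ℝ) (ν : Measure (Vec d)) : Measure (Vec d) :=
  Measure.map (fun p : ℝ × Vec d => radialProfile α p.1 • p.2)
    ((volume.restrict (Icc (0 : ℝ) 1)).prod ν)

theorem alphaRadial_eq_radialLaw (α : ℝ) : alphaRadial d α = radialLaw α (sphereUnif d) := rfl

theorem measurableSet_cap (u : Vec d) (ε : ℝ) : MeasurableSet (cap u ε) :=
  measurableSet_closedBall.inter (measurableSet_lt (g := fun x => ⟪u, x⟫) measurable_const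
    (continuous_const.inner continuous_id).measurable)

theorem restrict_Icc_prod_apply_Ioc_prod {E : Type*} [MeasurableSpace E] (ν : Measure E) [SFinite ν]
    {τ : ℝ} (hτ : τ ≤ 1) (A : Set E) :
    (volume.restrict (Icc (0 : ℝ) 1)).prod ν (Ioc (1 - τ) 1 ×ˢ A) = ENNReal.ofReal τ * ν A := by
  rw [Measure.prod_prod, Measure.restrict_apply measurableSet_Ioc,
    inter_eq_left.2 (Ioc_subset_Icc_self.trans (Icc_subset_Icc (by linarith) le_rfl)),
    Real.volume_Ioc, sub_sub_cancel]

theorem radialLaw_cap_le {ν : Measure (Vec d)} [SFinite ν] (hν : ν (sphere 0 1)ᶜ = 0) {α : ℝ}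
    (hα : 0 < α) {u : Vec d} (hu : ‖u‖ = 1) {ε : ℝ} (hε0 : 0 ≤ ε) (hε1 : ε ≤ 1) :
    radialLaw α ν (cap u ε) ≤ ENNReal.ofReal ((ε ^ 2) ^ α) * ν (sphereCap u ε) := by
  set P := (volume.restrict (Icc (0 : ℝ) 1)).prod ν
  have hsupp : ∀ᵐ p ∂P, p ∈ Icc (0 : ℝ) 1 ×ˢ sphere (0 : Vec d) 1 := by
    refine measure_mono_null (compl_prod_eq_union _ _).le (measure_union_null ?_ ?_)
    · rw [Measure.prod_prod, Measure.restrict_apply' measurableSet_Icc, compl_inter_self,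
        measure_empty, zero_mul]
    · rw [Measure.prod_prod, hν, mul_zero]
  have hsub : ∀ p ∈ Icc (0 : ℝ) 1 ×ˢ sphere (0 : Vec d) 1,
      radialProfile α p.1 • p.2 ∈ cap u ε → p ∈ Ioc (1 - (ε ^ 2) ^ α) 1 ×ˢ sphereCap u ε := by
    rintro ⟨r, x⟩ ⟨⟨hr0, hr1⟩, hx⟩ ⟨-, hcap⟩
    rw [mem_sphere_zero_iff_norm] at hx
    rw [real_inner_smul_right] at hcap
    have hh0 := radialProfile_nonneg hα hr0 hr1
    have hh1 := radialProfile_le_one α hr1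
    have hux : ⟪u, x⟫ ≤ 1 := by simpa [hu, hx] using real_inner_le_norm u x
    have hε2 : ε ^ 2 ≤ 1 := by nlinarith
    refine ⟨⟨?_, hr1⟩, ?_, ?_⟩
    · have := (one_sub_lt_radialProfile_iff hα hr1 (sq_nonneg ε)).1 (by nlinarith)
      linarith
    · exact mem_sphere_zero_iff_norm.2 hx
    · show 1 - ε ^ 2 < ⟪u, x⟫
      nlinarith
  rw [radialLaw, Measure.map_apply (measurable_radialProfile_smul α) (measurableSet_cap u ε),
    ← restrict_Icc_prod_apply_Ioc_prod ν
      (Real.rpow_le_one (sq_nonneg ε) (by nlinarith) hα.le)]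
  exact measure_mono_ae (hsupp.mono fun p hp hcap => hsub p hp hcap)

theorem le_radialLaw_cap (ν : Measure (Vec d)) [SFinite ν] {α : ℝ} (hα : 0 < α) {u : Vec d}
    (hu : ‖u‖ = 1) {ε : ℝ} (hε0 : 0 < ε) (hε1 : ε ≤ 1) :
    ENNReal.ofReal (((ε / 2) ^ 2) ^ α) * ν (sphereCap u (ε / 2)) ≤ radialLaw α ν (cap u ε) := by
  have hδ1 : (ε / 2) ^ 2 ≤ 1 / 4 := by nlinarith
  rw [← restrict_Icc_prod_apply_Ioc_prod ν
    (Real.rpow_le_one (sq_nonneg _) (by linarith) hα.le)]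
  refine (measure_mono ?_).trans
    (Measure.le_map_apply (measurable_radialProfile_smul α).aemeasurable _)
  rintro ⟨r, x⟩ ⟨⟨hr0, hr1⟩, hx, hux⟩
  rw [mem_sphere_zero_iff_norm] at hx
  rw [mem_ofPred_eq] at hux
  have hh := (one_sub_lt_radialProfile_iff hα hr1 (sq_nonneg (ε / 2))).2 (by linarith)
  have hh1 := radialProfile_le_one α hr1
  have hux1 : ⟪u, x⟫ ≤ 1 := by simpa [hu, hx] using real_inner_le_norm u x
  refine ⟨?_, ?_⟩
  · rw [mem_closedBall_zero_iff, norm_smul, hx, mul_one, Real.norm_of_nonneg (by linarith)]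
    exact hh1
  · show 1 - ε ^ 2 < ⟪u, radialProfile α r • x⟫
    rw [real_inner_smul_right]
    -- `(1 - ε² / 4)² > 1 - ε²`
    nlinarith [mul_lt_mul'' hh hux (by linarith) (by linarith)]

end RadialLaw

theorem exists_alphaRadial_cap_bounds (n : ℕ) {α : ℝ} (hα : 0 < α) :
    ∃ c₁ : ℝ, 0 < c₁ ∧ ∃ c₂ : ℝ, 0 < c₂ ∧ ∀ ε : ℝ, 0 < ε → ε ≤ 1 / 2 →
      ∀ u : Vec (n + 1), ‖u‖ = 1 →
        ENNReal.ofReal (c₁ * (ε ^ n * (ε ^ 2) ^ α)) ≤ alphaRadial (n + 1) α (cap u ε) ∧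
          alphaRadial (n + 1) α (cap u ε) ≤ ENNReal.ofReal (c₂ * (ε ^ n * (ε ^ 2) ^ α)) := by
  obtain ⟨κ, hκ, hσ⟩ := exists_sphereUnif_sphereCap_bounds n
  refine ⟨κ / 2 ^ n * (1 / 4) ^ α, by positivity, κ * (3 * √2) ^ n, by positivity,
    fun ε hε hε2 u hu => ⟨?_, ?_⟩⟩ <;> rw [alphaRadial_eq_radialLaw]
  · have hquarter : ((ε / 2) ^ 2) ^ α = (ε ^ 2) ^ α * (1 / 4) ^ α := by
      rw [show (ε / 2) ^ 2 = ε ^ 2 * (1 / 4) by ring, Real.mul_rpow (sq_nonneg ε) (by norm_num)]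
    calc ENNReal.ofReal (κ / 2 ^ n * (1 / 4) ^ α * (ε ^ n * (ε ^ 2) ^ α))
        = ENNReal.ofReal (((ε / 2) ^ 2) ^ α) * ENNReal.ofReal (κ * (ε / 2) ^ n) := by
          rw [← ENNReal.ofReal_mul (by positivity), hquarter, div_pow]
          congr 1
          ring
      _ ≤ ENNReal.ofReal (((ε / 2) ^ 2) ^ α) * sphereUnif (n + 1) (sphereCap u (ε / 2)) := by
          gcongr
          exact (hσ u hu (ε / 2) (by positivity) (by linarith)).1
      _ ≤ _ := le_radialLaw_cap _ hα hu hε (by linarith)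
  · calc radialLaw α (sphereUnif (n + 1)) (cap u ε)
        ≤ ENNReal.ofReal ((ε ^ 2) ^ α) * sphereUnif (n + 1) (sphereCap u ε) :=
          radialLaw_cap_le (sphereUnif_compl_sphere _) hα hu hε.le (by linarith)
      _ ≤ ENNReal.ofReal ((ε ^ 2) ^ α) * ENNReal.ofReal (κ * (3 * √2 * ε) ^ n) := by
          gcongr
          exact (hσ u hu ε hε hε2).2
      _ = _ := by
          rw [← ENNReal.ofReal_mul (by positivity), mul_pow]
          congr 1
          ring

/-- Lemma H.2: mass of a thin spherical cap. For `ε ∈ (0, 1/2]` and a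
unit vector `u`, the cap `C(u,ε) = {x ∈ B_1^d : uᵀx > 1 - ε²}` has `P_X(α)`-mass comparable
to `ε^{d-1+2α}`, with constants depending only on `d` and `α`. -/
theorem statement14 (d : ℕ) (hd : 1 < d) (α : ℝ) (hα : 0 < α) :
    ∃ c₁ : ℝ, 0 < c₁ ∧ ∃ c₂ : ℝ, 0 < c₂ ∧
      ∀ ε : ℝ, 0 < ε → ε ≤ 1 / 2 →
      ∀ u : Vec d, ‖u‖ = 1 →
        c₁ * ε ^ ((d : ℝ) - 1 + 2 * α) ≤ (alphaRadial d α (cap u ε)).toReal ∧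
          (alphaRadial d α (cap u ε)).toReal ≤ c₂ * ε ^ ((d : ℝ) - 1 + 2 * α) := by
  obtain ⟨n, rfl⟩ : ∃ n, d = n + 1 := ⟨d - 1, by omega⟩
  obtain ⟨c₁, hc₁, c₂, hc₂, hcap⟩ := exists_alphaRadial_cap_bounds n hα
  refine ⟨c₁, hc₁, c₂, hc₂, fun ε hε hε2 u hu => ?_⟩
  have hpow : ε ^ (((n + 1 : ℕ) : ℝ) - 1 + 2 * α) = ε ^ n * (ε ^ 2) ^ α := by
    rw [Nat.cast_succ, add_sub_cancel_right, Real.rpow_add hε, Real.rpow_natCast,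
      Real.rpow_mul hε.le]
    norm_cast
  obtain ⟨hlower, hupper⟩ := hcap ε hε hε2 u hu
  rw [hpow]
  exact ⟨(ENNReal.ofReal_le_iff_le_toReal (hupper.trans_lt ENNReal.ofReal_lt_top).ne).1 hlower,
    ENNReal.toReal_le_of_le_ofReal (by positivity) hupper⟩
end
end
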